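/- arXiv:2502.14117 — 8 statements merged into one kernel-verified Lean document; each statement's English description precedes it below -/
import Mathlib

section
/- Let d ≥ 1 and let w_s : ℝ^d × ℝ^d → ℝ be a continuous, bounded, symmetric kernel which is translation invariant (w_s(x,y) depends only on x−y) and pointwise positive semidefinite, and set W := w_s(x,x) (a constant by translation invariance). Let n ≥ 1, let a_1,…,a_n ∈ ℝ and let g_1,…,g_n : ℝ^d → ℝ be nonnegative integrable functions. Then 0 ≤ ∫_{(ℝ^d)^n} (∏_{i=1}^n g_i(x_i)) · exp(−∑_{1≤l<j≤n} a_l a_j w_s(x_l,x_j)) dx_1…dx_n ≤ exp(∑_{i=1}^n a_i^2 W / 2) · ∏_{i=1}^n ‖g_i‖_{L^1}. -/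
/-! Positive semidefiniteness of `w` at the points `x₁, …, xₙ` with coefficients `a₁, …, aₙ`
gives, after splitting the double sum into its diagonal and twice its upper triangle,
`-∑_{l<j} a_l a_j w(x_l, x_j) ≤ ∑ aᵢ² W / 2` pointwise. The integrand is therefore dominated by
`exp (∑ aᵢ² W / 2) ∏ gᵢ(xᵢ)`, whose integral factorises by Fubini. -/

open MeasureTheory Finset Real

theorem Finset.sum_sum_eq_sum_diag_add_two_nsmul_sum_lt {ι M : Type*} [Fintype ι] [LinearOrder ι]
    [AddCommMonoid M] (f : ι → ι → M) (hf : ∀ i j, f i j = f j i) :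
    ∑ i, ∑ j, f i j =
      ∑ i, f i i + 2 • ∑ p ∈ univ.filter (fun p : ι × ι => p.1 < p.2), f p.1 p.2 := by
  have hswap : ∑ p ∈ univ.filter (fun p : ι × ι => p.2 < p.1), f p.1 p.2 =
      ∑ p ∈ univ.filter (fun p : ι × ι => p.1 < p.2), f p.1 p.2 :=
    sum_equiv (Equiv.prodComm ι ι) (by simp) (fun p _ => hf p.1 p.2)
  have hdiag : ∑ p ∈ univ.filter (fun p : ι × ι => p.1 = p.2), f p.1 p.2 = ∑ i, f i i := by
    rw [sum_filter, Fintype.sum_prod_type]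
    simp
  calc ∑ i, ∑ j, f i j = ∑ p : ι × ι, f p.1 p.2 := (Fintype.sum_prod_type' f).symm
    _ = ∑ p : ι × ι, ((if p.1 = p.2 then f p.1 p.2 else 0) + (if p.1 < p.2 then f p.1 p.2 else 0)
          + (if p.2 < p.1 then f p.1 p.2 else 0)) := by
        refine sum_congr rfl fun p _ => ?_
        rcases lt_trichotomy p.1 p.2 with h | h | h
        · simp [h, h.ne, h.not_gt]
        · simp [h]
        · simp [h, h.ne', h.not_gt]
    _ = _ := by
        simp only [sum_add_distrib, ← sum_filter, hswap, hdiag, two_nsmul, add_assoc]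

theorem neg_sum_pairs_le_of_posSemidef {ι X : Type*} [Fintype ι] [LinearOrder ι]
    (w : X → X → ℝ) (W : ℝ) (hw_symm : ∀ x y, w x y = w y x) (hW : ∀ x, w x x = W)
    (x : ι → X) (a : ι → ℝ) (hpsd : 0 ≤ ∑ i, ∑ j, a i * a j * w (x i) (x j)) :
    -∑ p ∈ univ.filter (fun p : ι × ι => p.1 < p.2), a p.1 * a p.2 * w (x p.1) (x p.2) ≤
      ∑ i, a i ^ 2 * W / 2 := by
  rw [sum_sum_eq_sum_diag_add_two_nsmul_sum_lt _ fun i j => by rw [hw_symm]; ring] at hpsd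
  simp only [hW, ← sum_div, two_nsmul] at hpsd ⊢
  have : ∑ i, a i * a i * W = ∑ i, a i ^ 2 * W := sum_congr rfl fun i _ => by ring
  linarith

theorem integral_prod_mul_exp_le {ι : Type*} [Fintype ι] {E : ι → Type*}
    [∀ i, MeasureSpace (E i)] [∀ i, SigmaFinite (volume : Measure (E i))]
    (g : (i : ι) → E i → ℝ) (hg_int : ∀ i, Integrable (g i)) (hg_nonneg : ∀ i x, 0 ≤ g i x)
    (φ : ((i : ι) → E i) → ℝ) (C : ℝ) (hφ : ∀ x, φ x ≤ C) :
    ∫ x, (∏ i, g i (x i)) * exp (φ x) ≤ exp C * ∏ i, ∫ y, g i y := by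
  have hprod_nonneg : ∀ x : (i : ι) → E i, 0 ≤ ∏ i, g i (x i) :=
    fun x => prod_nonneg fun i _ => hg_nonneg i _
  calc ∫ x, (∏ i, g i (x i)) * exp (φ x) ≤ ∫ x : (i : ι) → E i, exp C * ∏ i, g i (x i) := by
        refine integral_mono_of_nonneg (.of_forall fun x => ?_)
          ((Integrable.fintype_prod_dep hg_int).const_mul _) (.of_forall fun x => ?_)
        · exact mul_nonneg (hprod_nonneg x) (exp_pos _).le
        · exact (mul_le_mul_of_nonneg_left (exp_le_exp.2 (hφ x)) (hprod_nonneg x)).trans_eq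
            (mul_comm _ _)
    _ = exp C * ∏ i, ∫ y, g i y := by
        rw [integral_const_mul, integral_fintype_prod_volume_eq_prod]

theorem vertex_operator_estimate_general
    (d : ℕ)
    (w : (Fin d → ℝ) → (Fin d → ℝ) → ℝ) (W : ℝ)
    (hw_symm : ∀ x y : Fin d → ℝ, w x y = w y x)
    (hw_psd : ∀ (k : ℕ) (z : Fin k → (Fin d → ℝ)) (c : Fin k → ℝ),
      0 ≤ ∑ i : Fin k, ∑ j : Fin k, c i * c j * w (z i) (z j))
    (hW : ∀ x : Fin d → ℝ, w x x = W)
    (n : ℕ) (a : Fin n → ℝ)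
    (g : Fin n → (Fin d → ℝ) → ℝ)
    (hg_int : ∀ i, Integrable (g i))
    (hg_nonneg : ∀ i x, 0 ≤ g i x) :
    0 ≤ (∫ x : Fin n → (Fin d → ℝ),
          (∏ i, g i (x i)) *
            Real.exp (-(∑ p ∈ Finset.univ.filter (fun p : Fin n × Fin n => p.1 < p.2),
              a p.1 * a p.2 * w (x p.1) (x p.2)))) ∧
    (∫ x : Fin n → (Fin d → ℝ),
          (∏ i, g i (x i)) *
            Real.exp (-(∑ p ∈ Finset.univ.filter (fun p : Fin n × Fin n => p.1 < p.2),
              a p.1 * a p.2 * w (x p.1) (x p.2))))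
      ≤ Real.exp (∑ i, (a i) ^ 2 * W / 2) * ∏ i, ∫ y, |g i y| := by
  refine ⟨integral_nonneg fun x =>
    mul_nonneg (prod_nonneg fun i _ => hg_nonneg i _) (exp_pos _).le, ?_⟩
  have hg_abs : ∀ i, ∫ y, |g i y| = ∫ y, g i y :=
    fun i => integral_congr_ae (.of_forall fun y => abs_of_nonneg (hg_nonneg i y))
  simp only [hg_abs]
  exact integral_prod_mul_exp_le g hg_int hg_nonneg _ _ fun x =>
    neg_sum_pairs_le_of_posSemidef w W hw_symm hW x a (hw_psd n x a)

/-- The key vertex-operator estimate (Lemma `le:estimate` of the paper):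
for a continuous, bounded, symmetric, translation-invariant, pointwise positive semidefinite
kernel `w` on `ℝ^d` with diagonal value `W`, real charges `a₁,…,aₙ` and nonnegative integrable
test functions `g₁,…,gₙ`, the smeared Gaussian-type integral is nonnegative and bounded by
`exp(∑ aᵢ² W / 2) · ∏ ‖gᵢ‖_{L¹}`. -/
theorem vertex_operator_estimate
    (d : ℕ) (hd : 1 ≤ d)
    (w : (Fin d → ℝ) → (Fin d → ℝ) → ℝ) (W : ℝ)
    (hw_cont : Continuous fun p : (Fin d → ℝ) × (Fin d → ℝ) => w p.1 p.2)
    (hw_bdd : ∃ C : ℝ, ∀ x y : Fin d → ℝ, |w x y| ≤ C)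
    (hw_symm : ∀ x y : Fin d → ℝ, w x y = w y x)
    (hw_transl : ∀ x y z : Fin d → ℝ, w (x + z) (y + z) = w x y)
    (hw_psd : ∀ (k : ℕ) (z : Fin k → (Fin d → ℝ)) (c : Fin k → ℝ),
      0 ≤ ∑ i : Fin k, ∑ j : Fin k, c i * c j * w (z i) (z j))
    (hW : ∀ x : Fin d → ℝ, w x x = W)
    (n : ℕ) (hn : 1 ≤ n) (a : Fin n → ℝ)
    (g : Fin n → (Fin d → ℝ) → ℝ)
    (hg_int : ∀ i, Integrable (g i))
    (hg_nonneg : ∀ i x, 0 ≤ g i x) :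
    0 ≤ (∫ x : Fin n → (Fin d → ℝ),
          (∏ i, g i (x i)) *
            Real.exp (-(∑ p ∈ Finset.univ.filter (fun p : Fin n × Fin n => p.1 < p.2),
              a p.1 * a p.2 * w (x p.1) (x p.2)))) ∧
    (∫ x : Fin n → (Fin d → ℝ),
          (∏ i, g i (x i)) *
            Real.exp (-(∑ p ∈ Finset.univ.filter (fun p : Fin n × Fin n => p.1 < p.2),
              a p.1 * a p.2 * w (x p.1) (x p.2))))
      ≤ Real.exp (∑ i, (a i) ^ 2 * W / 2) * ∏ i, ∫ y, |g i y| :=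
  vertex_operator_estimate_general d w W hw_symm hw_psd hW n a g hg_int hg_nonneg
end

section
/- Let d ≥ 1 and let w_s : ℝ^d × ℝ^d → ℝ be a continuous, symmetric, pointwise positive semidefinite kernel. Let n ≥ 1, a_1,…,a_n ∈ ℝ, and let g_1,…,g_n : ℝ^d → ℝ be nonnegative integrable functions such that all the integrals below are finite. Then ( ∫_{(ℝ^d)^n} (∏_{i=1}^n g_i(x_i)) e^{−∑_{1≤l<j≤n} a_l a_j w_s(x_l,x_j)} dx )^2 ≤ ∫_{(ℝ^d)^{2n}} (∏_{i=1}^n g_i(x_i) g_i(y_i)) · e^{−∑_{1≤l<j≤n} a_l a_j w_s(x_l,x_j)} · e^{−∑_{1≤l<j≤n} a_l a_j w_s(y_l,y_j)} · e^{+∑_{l,j=1}^n a_l a_j w_s(x_l,y_j)} dx dy. -/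
/-!
Write `F(x) = ∏ gᵢ(xᵢ) e^{-E(x)}` and `C(x, y) = ∑_{l,j} a_l a_j w(x_l, y_j)`. The right-hand
side minus the left-hand side is `∫∫ F(x) F(y) (e^{C(x,y)} - 1) dx dy`. The kernel `C` is
positive semidefinite, hence so is `e^C - 1` (Schur product theorem and the exponential series),
and a positive semidefinite kernel has a nonnegative double integral against the finite measure
`F dx`.

For a bounded kernel `K` and a probability measure `P`, integrate `∑_{i,j<N} K(xᵢ, xⱼ) ≥ 0`
against `P^N`: with `c = ∫ K(x, x) dP` and `m = ∫∫ K dP dP` this gives `N c + N (N - 1) m ≥ 0`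
for every `N`, so `m ≥ 0`. A general integrable kernel is reduced to this case by truncating to
`{x | K(x, x) ≤ M}`, where `|K| ≤ M` by Cauchy–Schwarz, and letting `M → ∞`.
-/

open MeasureTheory Finset Real

/-- The quadratic form `∑_{l<j} a_l a_j w(x_l, x_j)` appearing in smeared vertex-operator
products. -/
noncomputable def pairEnergy {d n : ℕ} (w : (Fin d → ℝ) → (Fin d → ℝ) → ℝ)
    (a : Fin n → ℝ) (x : Fin n → (Fin d → ℝ)) : ℝ :=
  ∑ p ∈ Finset.univ.filter (fun p : Fin n × Fin n => p.1 < p.2),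
    a p.1 * a p.2 * w (x p.1) (x p.2)

open scoped Matrix Nat ENNReal NNReal

structure IsPosSemidefKernel {α : Type*} (K : α → α → ℝ) : Prop where
  symm : ∀ x y, K x y = K y x
  nonneg : ∀ (k : ℕ) (z : Fin k → α) (c : Fin k → ℝ),
    0 ≤ ∑ i : Fin k, ∑ j : Fin k, c i * c j * K (z i) (z j)

def kernelMatrix {α ι : Type*} (K : α → α → ℝ) (z : ι → α) : Matrix ι ι ℝ :=
  Matrix.of fun i j => K (z i) (z j)

lemma star_dotProduct_kernelMatrix_mulVec {α ι : Type*} [Fintype ι] (K : α → α → ℝ)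
    (z : ι → α) (c : ι → ℝ) :
    star c ⬝ᵥ kernelMatrix K z *ᵥ c = ∑ i, ∑ j, c i * c j * K (z i) (z j) := by
  simp only [kernelMatrix, star_trivial, dotProduct, Matrix.mulVec, Matrix.of_apply, mul_sum]
  exact sum_congr rfl fun _ _ => sum_congr rfl fun _ _ => by ring

namespace IsPosSemidefKernel

variable {α : Type*} {K L : α → α → ℝ}

lemma nonneg_of_fintype (hK : IsPosSemidefKernel K) {ι : Type*} [Fintype ι] (z : ι → α)
    (c : ι → ℝ) : 0 ≤ ∑ i, ∑ j, c i * c j * K (z i) (z j) := by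
  let e := (Fintype.equivFin ι).symm
  refine (hK.nonneg _ (z ∘ e) (c ∘ e)).trans_eq ?_
  exact Fintype.sum_equiv e _ _ fun i => Fintype.sum_equiv e _ _ fun j => rfl

lemma posSemidef (hK : IsPosSemidefKernel K) {ι : Type*} [Fintype ι] (z : ι → α) :
    (kernelMatrix K z).PosSemidef :=
  .of_dotProduct_mulVec_nonneg (Matrix.IsHermitian.ext fun _ _ => (hK.symm _ _).symm)
    fun c => (star_dotProduct_kernelMatrix_mulVec K z c).symm ▸ hK.nonneg_of_fintype z c

lemma of_posSemidef (h : ∀ (k : ℕ) (z : Fin k → α), (kernelMatrix K z).PosSemidef) :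
    IsPosSemidefKernel K where
  symm x y := by simpa [kernelMatrix] using (h 2 ![y, x]).isHermitian.apply 0 1
  nonneg k z c :=
    star_dotProduct_kernelMatrix_mulVec K z c ▸ (h k z).dotProduct_mulVec_nonneg c

lemma mul (hK : IsPosSemidefKernel K) (hL : IsPosSemidefKernel L) :
    IsPosSemidefKernel fun x y => K x y * L x y :=
  of_posSemidef fun _ z => (hK.posSemidef z).hadamard (hL.posSemidef z)

lemma pow (hK : IsPosSemidefKernel K) {m : ℕ} (hm : 0 < m) :
    IsPosSemidefKernel fun x y => K x y ^ m := by
  induction m, hm using Nat.le_induction with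
  | base => simpa using hK
  | succ m _ ih => simpa only [pow_succ] using ih.mul hK

lemma const_mul (hK : IsPosSemidefKernel K) {r : ℝ} (hr : 0 ≤ r) :
    IsPosSemidefKernel fun x y => r * K x y where
  symm x y := by rw [hK.symm]
  nonneg k z c := by
    simpa only [mul_sum, mul_left_comm r] using mul_nonneg hr (hK.nonneg k z c)

lemma sum {ι : Type*} {s : Finset ι} {K : ι → α → α → ℝ}
    (hK : ∀ m ∈ s, IsPosSemidefKernel (K m)) :
    IsPosSemidefKernel fun x y => ∑ m ∈ s, K m x y where
  symm x y := sum_congr rfl fun m hm => (hK m hm).symm x y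
  nonneg k z c := by
    have h := sum_nonneg fun m hm => (hK m hm).nonneg k z c
    simp only [mul_sum]
    rw [sum_comm] at h
    exact h.trans_eq (sum_congr rfl fun _ _ => sum_comm)

lemma of_tendsto {ι : Type*} {l : Filter ι} [l.NeBot] {K : ι → α → α → ℝ}
    (hK : ∀ m, IsPosSemidefKernel (K m))
    (h : ∀ x y, Filter.Tendsto (fun m => K m x y) l (nhds (L x y))) :
    IsPosSemidefKernel L where
  symm x y := tendsto_nhds_unique (h x y) ((h y x).congr fun m => (hK m).symm y x)
  nonneg k z c := ge_of_tendsto'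
    (tendsto_finsetSum _ fun _ _ => tendsto_finsetSum _ fun _ _ => (h _ _).const_mul _)
    fun m => (hK m).nonneg k z c

lemma exp_sub_one (hK : IsPosSemidefKernel K) :
    IsPosSemidefKernel fun x y => Real.exp (K x y) - 1 := by
  refine of_tendsto (l := Filter.atTop)
    (K := fun M x y => ∑ m ∈ range M, ((m + 1)! : ℝ)⁻¹ * K x y ^ (m + 1))
    (fun M => sum fun m _ => (hK.pow m.succ_pos).const_mul (by positivity)) fun x y => ?_
  have h := (hasSum_nat_add_iff' 1).mpr
    (Real.exp_eq_exp_ℝ ▸ NormedSpace.expSeries_div_hasSum_exp (K x y))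
  simpa only [range_one, sum_singleton, pow_zero, Nat.factorial_zero, Nat.cast_one, div_one,
    inv_one, one_mul, div_eq_inv_mul] using h.tendsto_sum_nat

lemma weighted (hK : IsPosSemidefKernel K) (f : α → ℝ) :
    IsPosSemidefKernel fun x y => f x * f y * K x y where
  symm x y := by rw [hK.symm, mul_comm (f x)]
  nonneg k z c := (hK.nonneg k z fun i => c i * f (z i)).trans_eq
    (sum_congr rfl fun _ _ => sum_congr rfl fun _ _ => by ring)

lemma diag_nonneg (hK : IsPosSemidefKernel K) (x : α) : 0 ≤ K x x := by
  simpa using hK.nonneg 1 ![x] ![1]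

lemma sq_le_mul (hK : IsPosSemidefKernel K) (x y : α) : K x y ^ 2 ≤ K x x * K y y := by
  have h := (hK.posSemidef ![x, y]).det_nonneg
  simp only [Matrix.det_fin_two, kernelMatrix, Matrix.of_apply, Matrix.cons_val_zero,
    Matrix.cons_val_one, hK.symm y x] at h
  linarith

lemma abs_le_of_diag_le (hK : IsPosSemidefKernel K) {x y : α} {M : ℝ} (hx : K x x ≤ M)
    (hy : K y y ≤ M) : |K x y| ≤ M := by
  have hM : 0 ≤ M := (hK.diag_nonneg x).trans hx
  refine abs_le_of_sq_le_sq ((hK.sq_le_mul x y).trans ?_) hM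
  rw [sq]
  exact mul_le_mul hx hy (hK.diag_nonneg y) hM

end IsPosSemidefKernel

def crossEnergy {α ι : Type*} [Fintype ι] (w : α → α → ℝ) (a : ι → ℝ) (x y : ι → α) : ℝ :=
  ∑ l, ∑ j, a l * a j * w (x l) (y j)

lemma IsPosSemidefKernel.crossEnergy {α ι : Type*} [Fintype ι] {w : α → α → ℝ}
    (hw : IsPosSemidefKernel w) (a : ι → ℝ) : IsPosSemidefKernel (crossEnergy w a) where
  symm x y := by
    unfold _root_.crossEnergy
    rw [sum_comm]
    exact sum_congr rfl fun _ _ => sum_congr rfl fun _ _ => by rw [hw.symm]; ring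
  nonneg k z c := by
    refine (hw.nonneg_of_fintype (fun p : Fin k × ι => z p.1 p.2)
      fun p => c p.1 * a p.2).trans_eq ?_
    simp only [_root_.crossEnergy, Fintype.sum_prod_type, mul_sum]
    refine sum_congr rfl fun _ _ => ?_
    rw [sum_comm]
    exact sum_congr rfl fun _ _ => sum_congr rfl fun _ _ => sum_congr rfl fun _ _ => by ring

lemma continuous_crossEnergy {α ι : Type*} [TopologicalSpace α] [Fintype ι] {w : α → α → ℝ}
    (hw : Continuous fun p : α × α => w p.1 p.2) (a : ι → ℝ) :
    Continuous fun p : (ι → α) × (ι → α) => crossEnergy w a p.1 p.2 :=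
  continuous_finsetSum _ fun l _ => continuous_finsetSum _ fun j _ => continuous_const.mul
    (hw.comp (by fun_prop : Continuous fun p : (ι → α) × (ι → α) => (p.1 l, p.2 j)))

section KernelIntegral

open ProbabilityTheory

variable {α : Type*} [MeasurableSpace α] {K : α → α → ℝ}

lemma map_pi_eval_prodMk {ι : Type*} [Fintype ι] (P : Measure α) [IsProbabilityMeasure P]
    {i j : ι} (hij : i ≠ j) :
    (Measure.pi fun _ : ι => P).map (fun x => (x i, x j)) = P.prod P := by
  have hind := (iIndepFun_pi (μ := fun _ : ι => P) (X := fun _ => id)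
    fun _ => aemeasurable_id).indepFun hij
  rw [(indepFun_iff_map_prod_eq_prod_map_map (measurable_pi_apply i).aemeasurable
    (measurable_pi_apply j).aemeasurable).mp hind, (measurePreserving_eval _ i).map_eq,
    (measurePreserving_eval _ j).map_eq]

lemma integral_pi_kernel {ι : Type*} [Fintype ι] [DecidableEq ι] (P : Measure α)
    [IsProbabilityMeasure P] (hKm : Measurable fun p : α × α => K p.1 p.2) (i j : ι) :
    ∫ x, K (x i) (x j) ∂(Measure.pi fun _ : ι => P)
      = if i = j then ∫ x, K x x ∂P else ∫ p, K p.1 p.2 ∂(P.prod P) := by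
  split_ifs with hij
  · subst hij
    have hdiag : Measurable fun u => K u u := hKm.comp (measurable_id.prodMk measurable_id)
    exact integral_comp_eval (X := fun _ : ι => α) (μ := fun _ => P) (f := fun u => K u u)
      hdiag.aestronglyMeasurable
  · rw [← map_pi_eval_prodMk P hij, integral_map
      ((measurable_pi_apply i).prodMk (measurable_pi_apply j)).aemeasurable
      hKm.aestronglyMeasurable]

lemma integral_kernel_nonneg_of_abs_le_of_isProbabilityMeasure (P : Measure α)
    [IsProbabilityMeasure P] (hKm : Measurable fun p : α × α => K p.1 p.2)
    (hK : IsPosSemidefKernel K) {M : ℝ} (hM : ∀ x y, |K x y| ≤ M) :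
    0 ≤ ∫ p, K p.1 p.2 ∂(P.prod P) := by
  set c := ∫ x, K x x ∂P
  set m := ∫ p, K p.1 p.2 ∂(P.prod P)
  have key (N : ℕ) : 0 ≤ (N + 1) * (c + N * m) := by
    have hint (i j : Fin (N + 1)) :
        Integrable (fun x => K (x i) (x j)) (Measure.pi fun _ => P) :=
      .of_bound (hKm.comp (f := fun x : Fin (N + 1) → α => (x i, x j))
        (by fun_prop)).aestronglyMeasurable M (ae_of_all _ fun x => hM _ _)
    have h := integral_nonneg (μ := Measure.pi fun _ : Fin (N + 1) => P) fun x => by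
      simpa using hK.nonneg _ x 1
    rw [integral_finsetSum _ fun i _ => integrable_finsetSum _ fun j _ => hint i j] at h
    simp only [integral_finsetSum _ fun j _ => hint _ j, integral_pi_kernel P hKm] at h
    simp only [sum_ite, filter_eq, mem_univ, ↓reduceIte, sum_const, card_singleton, one_smul,
      filter_ne, card_erase_of_mem, card_univ, Fintype.card_fin, add_tsub_cancel_right,
      nsmul_eq_mul, smul_add, Nat.cast_add, Nat.cast_one] at h
    rwa [mul_add]
  have hlin (N : ℕ) : 0 ≤ c + N * m := nonneg_of_mul_nonneg_right (key N) (by positivity)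
  by_contra! hm
  obtain ⟨N, hN⟩ := exists_nat_gt (c / -m)
  rw [div_lt_iff₀ (neg_pos.mpr hm)] at hN
  linarith [hlin N]

lemma integral_kernel_nonneg_of_abs_le (μ : Measure α) [IsFiniteMeasure μ]
    (hKm : Measurable fun p : α × α => K p.1 p.2) (hK : IsPosSemidefKernel K) {M : ℝ}
    (hM : ∀ x y, |K x y| ≤ M) : 0 ≤ ∫ p, K p.1 p.2 ∂(μ.prod μ) := by
  rcases eq_zero_or_neZero μ with rfl | _
  · simp
  have hμ : μ = μ Set.univ • ((μ Set.univ)⁻¹ • μ) := by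
    rw [smul_smul, ENNReal.mul_inv_cancel (NeZero.ne _) (measure_ne_top _ _), one_smul]
  rw [hμ, Measure.prod_smul_left, Measure.prod_smul_right, integral_smul_measure,
    integral_smul_measure]
  have := integral_kernel_nonneg_of_abs_le_of_isProbabilityMeasure ((μ Set.univ)⁻¹ • μ) hKm hK hM
  positivity

lemma integral_kernel_nonneg (μ : Measure α) [IsFiniteMeasure μ]
    (hKm : Measurable fun p : α × α => K p.1 p.2) (hK : IsPosSemidefKernel K)
    (hint : Integrable (fun p : α × α => K p.1 p.2) (μ.prod μ)) :
    0 ≤ ∫ p, K p.1 p.2 ∂(μ.prod μ) := by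
  let χ : ℕ → α → ℝ := fun M x => if K x x ≤ M then 1 else 0
  have hχm (M : ℕ) : Measurable (χ M) :=
    Measurable.ite (measurableSet_le (hKm.comp (measurable_id.prodMk measurable_id))
      measurable_const) measurable_const measurable_const
  have hm (M : ℕ) : Measurable fun p : α × α => χ M p.1 * χ M p.2 * K p.1 p.2 :=
    (((hχm M).comp measurable_fst).mul ((hχm M).comp measurable_snd)).mul hKm
  have hbound (M : ℕ) (x y : α) : |χ M x * χ M y * K x y| ≤ M := by
    by_cases hx : K x x ≤ M
    · by_cases hy : K y y ≤ M
      · simpa [χ, hx, hy] using hK.abs_le_of_diag_le hx hy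
      · simp [χ, hy]
    · simp [χ, hx]
  have hdom (M : ℕ) (p : α × α) : ‖χ M p.1 * χ M p.2 * K p.1 p.2‖ ≤ ‖K p.1 p.2‖ := by
    simp only [χ]
    split_ifs <;> simp
  have hlim (p : α × α) : Filter.Tendsto (fun M => χ M p.1 * χ M p.2 * K p.1 p.2)
      Filter.atTop (nhds (K p.1 p.2)) := by
    refine tendsto_const_nhds.congr' ?_
    filter_upwards [tendsto_natCast_atTop_atTop.eventually_ge_atTop (K p.1 p.1),
      tendsto_natCast_atTop_atTop.eventually_ge_atTop (K p.2 p.2)] with M h1 h2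
    simp [χ, h1, h2]
  exact ge_of_tendsto' (tendsto_integral_of_dominated_convergence _
    (fun M => (hm M).aestronglyMeasurable) hint.norm (fun M => ae_of_all _ (hdom M))
    (ae_of_all _ hlim)) fun M =>
      integral_kernel_nonneg_of_abs_le μ (hm M) (hK.weighted (χ M)) (hbound M)

lemma integral_mul_mul_kernel_nonneg {μ : Measure α} [SigmaFinite μ] {ρ : α → ℝ}
    (hρ : ∀ x, 0 ≤ ρ x) (hρi : Integrable ρ μ)
    (hKm : Measurable fun p : α × α => K p.1 p.2) (hK : IsPosSemidefKernel K)
    (hint : Integrable (fun p : α × α => ρ p.1 * ρ p.2 * K p.1 p.2) (μ.prod μ)) :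
    0 ≤ ∫ p, ρ p.1 * ρ p.2 * K p.1 p.2 ∂(μ.prod μ) := by
  let ν := μ.withDensity fun x => ENNReal.ofReal (ρ x)
  have : IsFiniteMeasure ν := isFiniteMeasure_withDensity_ofReal hρi.2
  have hf : AEMeasurable (fun p : α × α => (ρ p.1).toNNReal * (ρ p.2).toNNReal) (μ.prod μ) :=
    (hρi.aemeasurable.real_toNNReal.comp_quasiMeasurePreserving
      Measure.quasiMeasurePreserving_fst).mul
    (hρi.aemeasurable.real_toNNReal.comp_quasiMeasurePreserving
      Measure.quasiMeasurePreserving_snd)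
  have hνν : ν.prod ν = (μ.prod μ).withDensity fun p =>
      (((ρ p.1).toNNReal * (ρ p.2).toNNReal : ℝ≥0) : ℝ≥0∞) := by
    simp only [ENNReal.coe_mul]
    exact prod_withDensity₀ hρi.aemeasurable.ennreal_ofReal hρi.aemeasurable.ennreal_ofReal
  have hsmul : (fun p : α × α => ((ρ p.1).toNNReal * (ρ p.2).toNNReal) • K p.1 p.2)
      = fun p => ρ p.1 * ρ p.2 * K p.1 p.2 := by
    ext p
    simp [NNReal.smul_def, Real.coe_toNNReal _ (hρ _)]
  have h := integral_kernel_nonneg ν hKm hK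
    (by rwa [hνν, integrable_withDensity_iff_integrable_smul₀ hf, hsmul])
  rwa [hνν, integral_withDensity_eq_integral_smul₀ hf, hsmul] at h

end KernelIntegral

theorem vertex_cauchy_schwarz_general
    (d : ℕ)
    (w : (Fin d → ℝ) → (Fin d → ℝ) → ℝ)
    (hw_cont : Continuous fun p : (Fin d → ℝ) × (Fin d → ℝ) => w p.1 p.2)
    (hw_symm : ∀ x y : Fin d → ℝ, w x y = w y x)
    (hw_psd : ∀ (k : ℕ) (z : Fin k → (Fin d → ℝ)) (c : Fin k → ℝ),
      0 ≤ ∑ i : Fin k, ∑ j : Fin k, c i * c j * w (z i) (z j))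
    (n : ℕ) (a : Fin n → ℝ)
    (g : Fin n → (Fin d → ℝ) → ℝ)
    (hg_nonneg : ∀ i x, 0 ≤ g i x)
    (hI1 : Integrable (fun x : Fin n → (Fin d → ℝ) =>
      (∏ i, g i (x i)) * Real.exp (-(pairEnergy w a x))))
    (hI2 : Integrable (fun q : (Fin n → (Fin d → ℝ)) × (Fin n → (Fin d → ℝ)) =>
      (∏ i, g i (q.1 i) * g i (q.2 i)) *
        (Real.exp (-(pairEnergy w a q.1)) * Real.exp (-(pairEnergy w a q.2)) *
          Real.exp (∑ l : Fin n, ∑ j : Fin n, a l * a j * w (q.1 l) (q.2 j))))) :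
    (∫ x : Fin n → (Fin d → ℝ),
        (∏ i, g i (x i)) * Real.exp (-(pairEnergy w a x))) ^ 2
      ≤ ∫ q : (Fin n → (Fin d → ℝ)) × (Fin n → (Fin d → ℝ)),
          (∏ i, g i (q.1 i) * g i (q.2 i)) *
            (Real.exp (-(pairEnergy w a q.1)) * Real.exp (-(pairEnergy w a q.2)) *
              Real.exp (∑ l : Fin n, ∑ j : Fin n, a l * a j * w (q.1 l) (q.2 j))) := by
  set F := fun x : Fin n → (Fin d → ℝ) => (∏ i, g i (x i)) * Real.exp (-(pairEnergy w a x))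
  have hF (x) : 0 ≤ F x := mul_nonneg (prod_nonneg fun i _ => hg_nonneg i _) (exp_pos _).le
  have hK := (IsPosSemidefKernel.crossEnergy ⟨hw_symm, hw_psd⟩ a).exp_sub_one
  have hKm : Measurable fun q : (Fin n → (Fin d → ℝ)) × (Fin n → (Fin d → ℝ)) =>
      Real.exp (crossEnergy w a q.1 q.2) - 1 :=
    ((continuous_crossEnergy hw_cont a).rexp.sub continuous_const).measurable
  have hsplit (q : (Fin n → (Fin d → ℝ)) × (Fin n → (Fin d → ℝ))) :
      (∏ i, g i (q.1 i) * g i (q.2 i)) *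
        (Real.exp (-(pairEnergy w a q.1)) * Real.exp (-(pairEnergy w a q.2)) *
          Real.exp (∑ l : Fin n, ∑ j : Fin n, a l * a j * w (q.1 l) (q.2 j)))
        = F q.1 * F q.2 + F q.1 * F q.2 * (Real.exp (crossEnergy w a q.1 q.2) - 1) := by
    simp only [F, crossEnergy, prod_mul_distrib]
    ring
  simp only [hsplit] at hI2 ⊢
  rw [Measure.volume_eq_prod] at hI2 ⊢
  have hFF : Integrable (fun q : (Fin n → (Fin d → ℝ)) × (Fin n → (Fin d → ℝ)) =>
      F q.1 * F q.2) (volume.prod volume) := hI1.mul_prod hI1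
  have hFFK : Integrable (fun q : (Fin n → (Fin d → ℝ)) × (Fin n → (Fin d → ℝ)) =>
      F q.1 * F q.2 * (Real.exp (crossEnergy w a q.1 q.2) - 1)) (volume.prod volume) := by
    refine (hI2.sub hFF).congr (ae_of_all _ fun q => ?_)
    simp
  rw [integral_add hFF hFFK, integral_prod_mul, sq]
  exact le_add_of_nonneg_right (integral_mul_mul_kernel_nonneg hF hI1 hKm hK hFFK)

/-- Cauchy–Schwarz type inequality for smeared vertex-operator integrals:
`(∫ ∏ gᵢ(xᵢ) e^{−∑_{l<j} a_l a_j w(x_l,x_j)} dx)² ≤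
  ∫∫ ∏ gᵢ(xᵢ)gᵢ(yᵢ) e^{−∑_{l<j} a_l a_j w(x_l,x_j)} e^{−∑_{l<j} a_l a_j w(y_l,y_j)}
      e^{∑_{l,j} a_l a_j w(x_l,y_j)} dx dy`. -/
theorem vertex_cauchy_schwarz
    (d : ℕ) (hd : 1 ≤ d)
    (w : (Fin d → ℝ) → (Fin d → ℝ) → ℝ)
    (hw_cont : Continuous fun p : (Fin d → ℝ) × (Fin d → ℝ) => w p.1 p.2)
    (hw_symm : ∀ x y : Fin d → ℝ, w x y = w y x)
    (hw_psd : ∀ (k : ℕ) (z : Fin k → (Fin d → ℝ)) (c : Fin k → ℝ),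
      0 ≤ ∑ i : Fin k, ∑ j : Fin k, c i * c j * w (z i) (z j))
    (n : ℕ) (hn : 1 ≤ n) (a : Fin n → ℝ)
    (g : Fin n → (Fin d → ℝ) → ℝ)
    (hg_int : ∀ i, Integrable (g i))
    (hg_nonneg : ∀ i x, 0 ≤ g i x)
    (hI1 : Integrable (fun x : Fin n → (Fin d → ℝ) =>
      (∏ i, g i (x i)) * Real.exp (-(pairEnergy w a x))))
    (hI2 : Integrable (fun q : (Fin n → (Fin d → ℝ)) × (Fin n → (Fin d → ℝ)) =>
      (∏ i, g i (q.1 i) * g i (q.2 i)) *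
        (Real.exp (-(pairEnergy w a q.1)) * Real.exp (-(pairEnergy w a q.2)) *
          Real.exp (∑ l : Fin n, ∑ j : Fin n, a l * a j * w (q.1 l) (q.2 j))))) :
    (∫ x : Fin n → (Fin d → ℝ),
        (∏ i, g i (x i)) * Real.exp (-(pairEnergy w a x))) ^ 2
      ≤ ∫ q : (Fin n → (Fin d → ℝ)) × (Fin n → (Fin d → ℝ)),
          (∏ i, g i (q.1 i) * g i (q.2 i)) *
            (Real.exp (-(pairEnergy w a q.1)) * Real.exp (-(pairEnergy w a q.2)) *
              Real.exp (∑ l : Fin n, ∑ j : Fin n, a l * a j * w (q.1 l) (q.2 j))) :=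
  vertex_cauchy_schwarz_general d w hw_cont hw_symm hw_psd n a g hg_nonneg hI1 hI2
end

section
/- Let d ≥ 1 and let w : ℝ^d × ℝ^d → ℂ be continuous, such that its real part w_s := Re w is symmetric, translation invariant and pointwise positive semidefinite; set W := w_s(x,x). Let g : ℝ^d → ℝ be nonnegative and integrable, and let f : ℝ → ℂ be measurable with A := ∫_ℝ |f(a)| e^{a^2 W/2} da < ∞. For every measurable field configuration φ : ℝ^d → ℝ and every n ≥ 1, the integral T_n(φ) := (i^n/n!) ∫_{ℝ^n} ∫_{(ℝ^d)^n} (∏_{j=1}^n f(a_j) g(x_j) e^{i a_j φ(x_j)}) · exp(−∑_{1≤l<j≤n} a_l a_j w(x_l,x_j)) dx da converges absolutely, with |T_n(φ)| ≤ (A ‖g‖_{L^1})^n / n!. Consequently the series S(φ) := 1 + ∑_{n≥1} T_n(φ) converges absolutely, uniformly in φ, and |S(φ)| ≤ exp(A ‖g‖_{L^1}) for every φ. -/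
/-
The modulus of the phase `e^{i a φ(x)}` is one, and positive semidefiniteness of `Re w` applied
to the coefficients `a_j` at the points `x_j` gives
`-∑_{l<j} a_l a_j Re w(x_l,x_j) ≤ ∑_j a_j² W / 2`. Hence the `n`-th integrand is dominated by the
product `∏_j |f(a_j)| e^{a_j² W/2} |g(x_j)|`, whose integral is `(A ‖g‖₁)ⁿ` by Fubini, so
`|T_n| ≤ (A ‖g‖₁)ⁿ/n!` and the series is dominated by the exponential series.
-/

open MeasureTheory Finset Real

/-- The integrand of the `n`-th time-ordered term of the S-matrix built from the interaction
Lagrangian `L_I(f,g)(φ) = ∫∫ e^{iaφ(x)} f(a) g(x) da dx`, with time-ordered kernel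
`exp(−∑_{l<j} a_l a_j w(x_l,x_j))`. -/
noncomputable def smatrixIntegrand {d : ℕ} (w : (Fin d → ℝ) → (Fin d → ℝ) → ℂ)
    (g : (Fin d → ℝ) → ℝ) (f : ℝ → ℂ) (φ : (Fin d → ℝ) → ℝ) (n : ℕ)
    (q : (Fin n → ℝ) × (Fin n → (Fin d → ℝ))) : ℂ :=
  (∏ j, f (q.1 j) * (g (q.2 j) : ℂ) * Complex.exp (Complex.I * (q.1 j : ℂ) * (φ (q.2 j) : ℂ))) *
    Complex.exp (-(∑ p ∈ Finset.univ.filter (fun p : Fin n × Fin n => p.1 < p.2),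
      (q.1 p.1 : ℂ) * (q.1 p.2 : ℂ) * w (q.2 p.1) (q.2 p.2)))

/-- The `n`-th order term `T_n(φ) = (iⁿ/n!) ∫∫ ∏ⱼ f(aⱼ) g(xⱼ) e^{i aⱼ φ(xⱼ)}
  e^{−∑_{l<j} a_l a_j w(x_l,x_j)} dx da` of the S-matrix series. -/
noncomputable def smatrixTerm {d : ℕ} (w : (Fin d → ℝ) → (Fin d → ℝ) → ℂ)
    (g : (Fin d → ℝ) → ℝ) (f : ℝ → ℂ) (φ : (Fin d → ℝ) → ℝ) (n : ℕ) : ℂ :=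
  (Complex.I ^ n / (n.factorial : ℂ)) *
    ∫ q : (Fin n → ℝ) × (Fin n → (Fin d → ℝ)), smatrixIntegrand w g f φ n q

section QuadraticForm

variable {ι : Type*} [Fintype ι] [LinearOrder ι]

theorem sum_sum_eq_sum_diag_add_two_mul_sum_lt {R : Type*} [CommSemiring R] (F : ι → ι → R)
    (hF : ∀ i j, F i j = F j i) :
    ∑ i, ∑ j, F i j =
      ∑ i, F i i + 2 * ∑ p ∈ univ.filter (fun p : ι × ι => p.1 < p.2), F p.1 p.2 := by
  have hsplit : ∀ p : ι × ι, F p.1 p.2 =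
      ((if p.1 < p.2 then F p.1 p.2 else 0) + if p.1 = p.2 then F p.1 p.2 else 0) +
        if p.2 < p.1 then F p.2 p.1 else 0 := by
    rintro ⟨i, j⟩
    rcases lt_trichotomy i j with h | rfl | h
    · simp [h, h.ne, h.not_gt]
    · simp
    · simp [h, h.ne', h.not_gt, hF i j]
  have hswap : ∑ p : ι × ι, (if p.2 < p.1 then F p.2 p.1 else 0) =
      ∑ p : ι × ι, if p.1 < p.2 then F p.1 p.2 else 0 :=
    Fintype.sum_equiv (Equiv.prodComm ι ι) _ _ fun _ => rfl
  have hdiag : ∑ p : ι × ι, (if p.1 = p.2 then F p.1 p.2 else 0) = ∑ i, F i i := by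
    simp [Fintype.sum_prod_type]
  rw [← Fintype.sum_prod_type', Fintype.sum_congr _ _ hsplit, sum_add_distrib, sum_add_distrib,
    hswap, hdiag, sum_filter]
  ring

theorem neg_sum_lt_le_of_quadratic_nonneg (a : ι → ℝ) (R : ι → ι → ℝ) (W : ℝ)
    (hsymm : ∀ i j, R i j = R j i) (hdiag : ∀ i, R i i = W)
    (hpsd : 0 ≤ ∑ i, ∑ j, a i * a j * R i j) :
    -∑ p ∈ univ.filter (fun p : ι × ι => p.1 < p.2), a p.1 * a p.2 * R p.1 p.2 ≤
      ∑ i, a i ^ 2 * W / 2 := by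
  rw [sum_sum_eq_sum_diag_add_two_mul_sum_lt _ fun i j => by rw [hsymm]; ring] at hpsd
  have hdiag_sum : ∑ i, a i * a i * R i i = 2 * ∑ i, a i ^ 2 * W / 2 := by
    rw [mul_sum]
    exact sum_congr rfl fun i _ => by rw [hdiag]; ring
  linarith

end QuadraticForm

section ProductMajorant

variable {ι α β : Type*} [Fintype ι] [MeasureSpace α] [MeasureSpace β]
  [SigmaFinite (volume : Measure α)] [SigmaFinite (volume : Measure β)]

theorem integrable_prod_pi_mul_prod_pi {F : α → ℝ} {G : β → ℝ} (hF : Integrable F)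
    (hG : Integrable G) :
    Integrable fun q : (ι → α) × (ι → β) => (∏ j, F (q.1 j)) * ∏ j, G (q.2 j) :=
  (Integrable.fintype_prod fun _ => hF).mul_prod (Integrable.fintype_prod fun _ => hG)

theorem integral_prod_pi_mul_prod_pi (F : α → ℝ) (G : β → ℝ) :
    ∫ q : (ι → α) × (ι → β), (∏ j, F (q.1 j)) * ∏ j, G (q.2 j) =
      (∫ a, F a) ^ Fintype.card ι * (∫ b, G b) ^ Fintype.card ι := by
  rw [Measure.volume_eq_prod, integral_prod_mul (fun a : ι → α => ∏ j, F (a j))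
    (fun b : ι → β => ∏ j, G (b j)), volume_pi, volume_pi, integral_fintype_prod_eq_pow,
    integral_fintype_prod_eq_pow]

end ProductMajorant

theorem summable_norm_succ_of_norm_le_pow_div_factorial {E : Type*} [SeminormedAddCommGroup E]
    {T : ℕ → E} {c : ℝ} (hT : ∀ n, ‖T n‖ ≤ c ^ n / n.factorial) :
    Summable fun n => ‖T (n + 1)‖ :=
  .of_nonneg_of_le (fun _ => norm_nonneg _) (fun n => hT (n + 1))
    ((summable_nat_add_iff 1).2 (Real.summable_pow_div_factorial c))

theorem norm_one_add_tsum_le_exp {E : Type*} [NormedRing E] [NormOneClass E] {T : ℕ → E} {c : ℝ}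
    (hT : ∀ n, ‖T n‖ ≤ c ^ n / n.factorial) :
    ‖1 + ∑' n, T (n + 1)‖ ≤ Real.exp c := by
  have hexp : HasSum (fun n => c ^ n / n.factorial) (Real.exp c) := by
    rw [Real.exp_eq_exp_ℝ]
    exact NormedSpace.expSeries_div_hasSum_exp c
  have hexp_succ : HasSum (fun n => c ^ (n + 1) / (n + 1).factorial) (Real.exp c - 1) := by
    simpa using (hasSum_nat_add_iff' 1).2 hexp
  calc ‖1 + ∑' n, T (n + 1)‖ ≤ 1 + ∑' n, ‖T (n + 1)‖ := by
        grw [norm_add_le, norm_one, norm_tsum_le_tsum_norm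
          (summable_norm_succ_of_norm_le_pow_div_factorial hT)]
    _ ≤ 1 + (Real.exp c - 1) := by
        grw [(summable_norm_succ_of_norm_le_pow_div_factorial hT).tsum_le_tsum
          (fun n => hT (n + 1)) hexp_succ.summable, hexp_succ.tsum_eq]
    _ = Real.exp c := by ring

section SMatrix

variable {d n : ℕ} {w : (Fin d → ℝ) → (Fin d → ℝ) → ℂ} {W : ℝ} {g : (Fin d → ℝ) → ℝ}
  {f : ℝ → ℂ} {φ : (Fin d → ℝ) → ℝ}

theorem norm_smatrixIntegrand (q : (Fin n → ℝ) × (Fin n → (Fin d → ℝ))) :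
    ‖smatrixIntegrand w g f φ n q‖ = (∏ j, ‖f (q.1 j)‖ * |g (q.2 j)|) *
      Real.exp (-∑ p ∈ univ.filter (fun p : Fin n × Fin n => p.1 < p.2),
        q.1 p.1 * q.1 p.2 * (w (q.2 p.1) (q.2 p.2)).re) := by
  have hphase : ∀ j, ‖Complex.exp (Complex.I * (q.1 j : ℂ) * (φ (q.2 j) : ℂ))‖ = 1 := fun j => by
    simp [Complex.norm_exp, Complex.mul_re]
  simp only [smatrixIntegrand, norm_mul, norm_prod, hphase, mul_one, Complex.norm_real,
    Real.norm_eq_abs, Complex.norm_exp, Complex.neg_re, Complex.re_sum, Complex.re_ofReal_mul,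
    ← Complex.ofReal_mul]

theorem norm_smatrixIntegrand_le (hw_symm : ∀ x y, (w x y).re = (w y x).re)
    (hw_psd : ∀ (k : ℕ) (z : Fin k → (Fin d → ℝ)) (c : Fin k → ℝ),
      0 ≤ ∑ i : Fin k, ∑ j : Fin k, c i * c j * (w (z i) (z j)).re)
    (hW : ∀ x, (w x x).re = W) (q : (Fin n → ℝ) × (Fin n → (Fin d → ℝ))) :
    ‖smatrixIntegrand w g f φ n q‖ ≤
      (∏ j, ‖f (q.1 j)‖ * Real.exp (q.1 j ^ 2 * W / 2)) * ∏ j, |g (q.2 j)| := by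
  have hkernel := neg_sum_lt_le_of_quadratic_nonneg q.1 (fun i j => (w (q.2 i) (q.2 j)).re) W
    (fun _ _ => hw_symm _ _) (fun _ => hW _) (hw_psd n q.2 q.1)
  calc ‖smatrixIntegrand w g f φ n q‖
      ≤ (∏ j, ‖f (q.1 j)‖ * |g (q.2 j)|) * Real.exp (∑ j, q.1 j ^ 2 * W / 2) := by
        rw [norm_smatrixIntegrand]
        gcongr
    _ = (∏ j, ‖f (q.1 j)‖ * Real.exp (q.1 j ^ 2 * W / 2)) * ∏ j, |g (q.2 j)| := by
        rw [Real.exp_sum, ← prod_mul_distrib, ← prod_mul_distrib]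
        exact prod_congr rfl fun j _ => by ring

theorem aestronglyMeasurable_smatrixIntegrand
    (hw_cont : Continuous fun p : (Fin d → ℝ) × (Fin d → ℝ) => w p.1 p.2)
    (hg : AEStronglyMeasurable g) (hf_meas : Measurable f) (hφ : Measurable φ) :
    AEStronglyMeasurable (smatrixIntegrand w g f φ n) := by
  have ha : ∀ j : Fin n, Measurable fun q : (Fin n → ℝ) × (Fin n → (Fin d → ℝ)) => q.1 j :=
    fun j => (measurable_pi_apply j).comp measurable_fst
  have hx : ∀ j : Fin n, Measurable fun q : (Fin n → ℝ) × (Fin n → (Fin d → ℝ)) => q.2 j :=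
    fun j => (measurable_pi_apply j).comp measurable_snd
  have hgx : ∀ j : Fin n, AEStronglyMeasurable
      fun q : (Fin n → ℝ) × (Fin n → (Fin d → ℝ)) => (g (q.2 j) : ℂ) := fun j =>
    Complex.continuous_ofReal.comp_aestronglyMeasurable <| hg.comp_quasiMeasurePreserving <|
      (Measure.quasiMeasurePreserving_eval _ j).comp Measure.quasiMeasurePreserving_snd
  refine .mul (Finset.aestronglyMeasurable_fun_prod _ fun j _ => .mul (.mul ?_ (hgx j)) ?_) ?_
  · exact (hf_meas.comp (ha j)).aestronglyMeasurable
  · exact (Complex.measurable_exp.comp ((measurable_const.mul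
      (Complex.measurable_ofReal.comp (ha j))).mul
      (Complex.measurable_ofReal.comp (hφ.comp (hx j))))).aestronglyMeasurable
  · refine (Complex.measurable_exp.comp (Measurable.neg
      (Finset.measurable_sum _ fun p _ => ?_))).aestronglyMeasurable
    exact ((Complex.measurable_ofReal.comp (ha p.1)).mul
      (Complex.measurable_ofReal.comp (ha p.2))).mul
      (hw_cont.measurable.comp ((hx p.1).prodMk (hx p.2)))

variable (hw_symm : ∀ x y, (w x y).re = (w y x).re)
    (hw_psd : ∀ (k : ℕ) (z : Fin k → (Fin d → ℝ)) (c : Fin k → ℝ),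
      0 ≤ ∑ i : Fin k, ∑ j : Fin k, c i * c j * (w (z i) (z j)).re)
    (hW : ∀ x, (w x x).re = W) (hg_int : Integrable g)
    (hf_int : Integrable fun a : ℝ => ‖f a‖ * Real.exp (a ^ 2 * W / 2))
include hw_symm hw_psd hW hg_int hf_int

theorem integrable_smatrixIntegrand
    (hw_cont : Continuous fun p : (Fin d → ℝ) × (Fin d → ℝ) => w p.1 p.2)
    (hf_meas : Measurable f) (hφ : Measurable φ) :
    Integrable (smatrixIntegrand w g f φ n) :=
  (integrable_prod_pi_mul_prod_pi hf_int hg_int.abs).mono'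
    (aestronglyMeasurable_smatrixIntegrand hw_cont hg_int.1 hf_meas hφ)
    (.of_forall (norm_smatrixIntegrand_le hw_symm hw_psd hW))

theorem norm_smatrixTerm_le :
    ‖smatrixTerm w g f φ n‖ ≤
      ((∫ a, ‖f a‖ * Real.exp (a ^ 2 * W / 2)) * ∫ x, |g x|) ^ n / n.factorial := by
  have hint : ‖∫ q, smatrixIntegrand w g f φ n q‖ ≤
      (∫ a, ‖f a‖ * Real.exp (a ^ 2 * W / 2)) ^ n * (∫ x, |g x|) ^ n := by
    refine (norm_integral_le_of_norm_le (integrable_prod_pi_mul_prod_pi hf_int hg_int.abs)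
      (.of_forall (norm_smatrixIntegrand_le hw_symm hw_psd hW))).trans_eq ?_
    rw [integral_prod_pi_mul_prod_pi (fun a => ‖f a‖ * Real.exp (a ^ 2 * W / 2)) (|g ·|),
      Fintype.card_fin]
  rw [smatrixTerm, norm_mul, norm_div, norm_pow, Complex.norm_I, one_pow, Complex.norm_natCast,
    mul_pow, one_div_mul_eq_div]
  gcongr

end SMatrix

theorem smatrix_convergence_general
    (d : ℕ)
    (w : (Fin d → ℝ) → (Fin d → ℝ) → ℂ) (W : ℝ)
    (hw_cont : Continuous fun p : (Fin d → ℝ) × (Fin d → ℝ) => w p.1 p.2)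
    (hw_symm : ∀ x y : Fin d → ℝ, (w x y).re = (w y x).re)
    (hw_psd : ∀ (k : ℕ) (z : Fin k → (Fin d → ℝ)) (c : Fin k → ℝ),
      0 ≤ ∑ i : Fin k, ∑ j : Fin k, c i * c j * (w (z i) (z j)).re)
    (hW : ∀ x : Fin d → ℝ, (w x x).re = W)
    (g : (Fin d → ℝ) → ℝ) (hg_int : Integrable g)
    (f : ℝ → ℂ) (hf_meas : Measurable f)
    (hf_int : Integrable (fun a : ℝ => ‖f a‖ * Real.exp (a ^ 2 * W / 2)))
    (A : ℝ) (hA : A = ∫ a : ℝ, ‖f a‖ * Real.exp (a ^ 2 * W / 2))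
    (φ : (Fin d → ℝ) → ℝ) (hφ : Measurable φ) :
    (∀ n : ℕ, 1 ≤ n → Integrable (smatrixIntegrand w g f φ n)) ∧
    (∀ n : ℕ, 1 ≤ n →
      ‖smatrixTerm w g f φ n‖ ≤ (A * ∫ x, |g x|) ^ n / (n.factorial : ℝ)) ∧
    Summable (fun n : ℕ => ‖smatrixTerm w g f φ (n + 1)‖) ∧
    ‖1 + ∑' n : ℕ, smatrixTerm w g f φ (n + 1)‖ ≤ Real.exp (A * ∫ x, |g x|) := by
  have hterm : ∀ n, ‖smatrixTerm w g f φ n‖ ≤ (A * ∫ x, |g x|) ^ n / n.factorial := fun n =>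
    hA ▸ norm_smatrixTerm_le hw_symm hw_psd hW hg_int hf_int
  exact ⟨fun n _ => integrable_smatrixIntegrand hw_symm hw_psd hW hg_int hf_int hw_cont hf_meas hφ,
    fun n _ => hterm n, summable_norm_succ_of_norm_le_pow_div_factorial hterm,
    norm_one_add_tsum_le_exp hterm⟩

/-- (Theorem `th:convergence-Smatrix` of the paper.) For a continuous kernel `w`
whose real part is symmetric, translation invariant and pointwise positive semidefinite with
diagonal value `W`, a nonnegative integrable `g` and a measurable `f` with
`A = ∫ |f(a)| e^{a²W/2} da < ∞`, each term of the S-matrix series converges absolutely with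
`|T_n(φ)| ≤ (A‖g‖₁)ⁿ/n!`, the series converges absolutely (uniformly in `φ`), and the sum is
bounded by `exp(A‖g‖₁)`. -/
theorem smatrix_convergence
    (d : ℕ) (hd : 1 ≤ d)
    (w : (Fin d → ℝ) → (Fin d → ℝ) → ℂ) (W : ℝ)
    (hw_cont : Continuous fun p : (Fin d → ℝ) × (Fin d → ℝ) => w p.1 p.2)
    (hw_symm : ∀ x y : Fin d → ℝ, (w x y).re = (w y x).re)
    (hw_transl : ∀ x y z : Fin d → ℝ, (w (x + z) (y + z)).re = (w x y).re)
    (hw_psd : ∀ (k : ℕ) (z : Fin k → (Fin d → ℝ)) (c : Fin k → ℝ),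
      0 ≤ ∑ i : Fin k, ∑ j : Fin k, c i * c j * (w (z i) (z j)).re)
    (hW : ∀ x : Fin d → ℝ, (w x x).re = W)
    (g : (Fin d → ℝ) → ℝ) (hg_int : Integrable g) (hg_nonneg : ∀ x, 0 ≤ g x)
    (f : ℝ → ℂ) (hf_meas : Measurable f)
    (hf_int : Integrable (fun a : ℝ => ‖f a‖ * Real.exp (a ^ 2 * W / 2)))
    (A : ℝ) (hA : A = ∫ a : ℝ, ‖f a‖ * Real.exp (a ^ 2 * W / 2))
    (φ : (Fin d → ℝ) → ℝ) (hφ : Measurable φ) :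
    (∀ n : ℕ, 1 ≤ n → Integrable (smatrixIntegrand w g f φ n)) ∧
    (∀ n : ℕ, 1 ≤ n →
      ‖smatrixTerm w g f φ n‖ ≤ (A * ∫ x, |g x|) ^ n / (n.factorial : ℝ)) ∧
    Summable (fun n : ℕ => ‖smatrixTerm w g f φ (n + 1)‖) ∧
    ‖1 + ∑' n : ℕ, smatrixTerm w g f φ (n + 1)‖ ≤ Real.exp (A * ∫ x, |g x|) :=
  smatrix_convergence_general d w W hw_cont hw_symm hw_psd hW g hg_int f hf_meas hf_int A hA φ hφ
end

section
/- Let d ≥ 2, m > 0, Λ > 0, and let χ : ℝ^{d−1} → ℝ be a smooth, compactly supported, even (χ(−x)=χ(x)) real-valued function, so that its Fourier transform χ̂ is real valued. Define w_s : ℝ^d → ℝ by w_s(t,x) := (2π)^{1−d} ∫_{ℝ^{d−1}} (2 ω_p)^{−1} cos(⟨x,p⟩ − ω_p t) χ̂(Λp)^2 dp, where ω_p := √(|p|^2+m^2); thus w_s = Re Δ_{+,Λ}. Then w_s is continuous and bounded, w_s(−z) = w_s(z) for all z ∈ ℝ^d, and the kernel (z,z') ↦ w_s(z − z') on ℝ^d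 × ℝ^d is pointwise positive semidefinite: for every k, all z_1,…,z_k ∈ ℝ^d and all reals c_1,…,c_k, ∑_{i,j=1}^k c_i c_j w_s(z_i − z_j) ≥ 0. -/
open MeasureTheory Real
open scoped FourierTransform RealInnerProductSpace

/-- Auxiliary: a smooth compactly supported function is a Schwartz map. -/
noncomputable def smoothCompactSupportToSchwartz {E F : Type*} [NormedAddCommGroup E]
    [NormedSpace ℝ E] [NormedAddCommGroup F] [NormedSpace ℝ F]
    (f : E → F) (h1 : ContDiff ℝ (⊤ : ℕ∞) f) (h2 : HasCompactSupport f) : SchwartzMap E F where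
  toFun := f
  smooth' := h1.of_le (by simp)
  decay' := by
    intro kk n
    have hD : HasCompactSupport (_root_.iteratedFDeriv ℝ n f) := HasCompactSupport.iteratedFDeriv h2 n
    obtain ⟨C, hC⟩ := hD.exists_bound_of_continuous (h1.continuous_iteratedFDeriv (by exact_mod_cast le_top))
    have hC0 : 0 ≤ C := le_trans (norm_nonneg _) (hC 0)
    obtain ⟨R, hR⟩ := hD.isCompact.isBounded.subset_closedBall 0
    refine ⟨(max R 0) ^ kk * C, fun x => ?_⟩
    by_cases hx : x ∈ tsupport (_root_.iteratedFDeriv ℝ n f)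
    · have hxR : ‖x‖ ≤ max R 0 :=
        le_trans (by simpa [Metric.mem_closedBall, dist_zero_right] using hR hx)
          (le_max_left _ _)
      exact mul_le_mul (pow_le_pow_left₀ (norm_nonneg _) hxR kk) (hC x) (norm_nonneg _)
        (by positivity)
    · rw [image_eq_zero_of_notMem_tsupport hx]
      simp only [norm_zero, mul_zero]
      positivity

/-- The symmetric part `w_s = Re Δ_{+,Λ}` of the regularized two-point function:
`w_s(t,x) = (2π)^{1−d} ∫ (2ω_p)⁻¹ cos(⟨x,p⟩ − ω_p t) χ̂(Λp)² dp`, with `d = k+1` and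
`ω_p = √(|p|² + m²)`; here `χ̂(Λp)` is real since `χ` is real and even, and we take its
real part. -/
noncomputable def wsKernel (k : ℕ) (m Λ : ℝ)
    (χ : EuclideanSpace ℝ (Fin k) → ℝ) (q : ℝ × EuclideanSpace ℝ (Fin k)) : ℝ :=
  ((2 * Real.pi) ^ k)⁻¹ * ∫ p : EuclideanSpace ℝ (Fin k),
    (2 * Real.sqrt (‖p‖ ^ 2 + m ^ 2))⁻¹ *
      Real.cos ((⟪q.2, p⟫ : ℝ) - Real.sqrt (‖p‖ ^ 2 + m ^ 2) * q.1) *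
      ((𝓕 (fun y => (χ y : ℂ)) (Λ • p)).re) ^ 2

set_option maxHeartbeats 1000000 in
/-- For `d = k+1 ≥ 2`, `m > 0`, `Λ > 0` and a smooth, compactly supported,
even, real cutoff `χ`, the symmetric part `w_s = Re Δ_{+,Λ}` of the regularized two-point
function is continuous and bounded, even (`w_s(−z) = w_s(z)`), and the translation-invariant
kernel `(z,z') ↦ w_s(z − z')` is pointwise positive semidefinite. -/
theorem wsKernel_properties
    (k : ℕ) (hk : 1 ≤ k) (m Λ : ℝ) (hm : 0 < m) (hΛ : 0 < Λ)
    (χ : EuclideanSpace ℝ (Fin k) → ℝ)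
    (hχ_smooth : ContDiff ℝ (⊤ : ℕ∞) χ) (hχ_supp : HasCompactSupport χ)
    (hχ_even : ∀ x, χ (-x) = χ x) :
    Continuous (wsKernel k m Λ χ) ∧
    (∃ C : ℝ, ∀ q : ℝ × EuclideanSpace ℝ (Fin k), |wsKernel k m Λ χ q| ≤ C) ∧
    (∀ q : ℝ × EuclideanSpace ℝ (Fin k), wsKernel k m Λ χ (-q) = wsKernel k m Λ χ q) ∧
    (∀ (r : ℕ) (z : Fin r → ℝ × EuclideanSpace ℝ (Fin k)) (c : Fin r → ℝ),
      0 ≤ ∑ i : Fin r, ∑ j : Fin r, c i * c j * wsKernel k m Λ χ (z i - z j)) := by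
  classical
  -- the Schwartz version of χ (as a complex valued function)
  have hχℂ_smooth : ContDiff ℝ (⊤ : ℕ∞) (fun y : EuclideanSpace ℝ (Fin k) => (χ y : ℂ)) :=
    Complex.ofRealCLM.contDiff.comp hχ_smooth
  have hχℂ_supp : HasCompactSupport (fun y : EuclideanSpace ℝ (Fin k) => (χ y : ℂ)) := by
    exact HasCompactSupport.comp_left (g := fun t : ℝ => (t : ℂ)) hχ_supp (by simp)
  set φ : SchwartzMap (EuclideanSpace ℝ (Fin k)) ℂ :=
    smoothCompactSupportToSchwartz _ hχℂ_smooth hχℂ_supp with hφ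
  set ψ : SchwartzMap (EuclideanSpace ℝ (Fin k)) ℂ :=
    SchwartzMap.fourierTransformCLM ℝ φ with hψdef
  have hψ : 𝓕 (fun y : EuclideanSpace ℝ (Fin k) => (χ y : ℂ)) = ⇑ψ := by
    rw [hψdef, SchwartzMap.fourierTransformCLM_apply]
    rfl
  -- notation
  set ω : EuclideanSpace ℝ (Fin k) → ℝ := fun p => Real.sqrt (‖p‖ ^ 2 + m ^ 2) with hω
  set g : EuclideanSpace ℝ (Fin k) → ℝ := fun p => (ψ (Λ • p)).re with hg
  set F : (ℝ × EuclideanSpace ℝ (Fin k)) → EuclideanSpace ℝ (Fin k) → ℝ := fun q p =>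
    (2 * ω p)⁻¹ * Real.cos ((⟪q.2, p⟫ : ℝ) - ω p * q.1) * (g p) ^ 2 with hF
  have hws : ∀ q, wsKernel k m Λ χ q = ((2 * Real.pi) ^ k)⁻¹ * ∫ p, F q p := by
    intro q
    simp only [wsKernel, hψ, hF, hω, hg]
  have hωpos : ∀ p, 0 < ω p := fun p => Real.sqrt_pos.2 (by positivity)
  have hωm : ∀ p, m ≤ ω p := by
    intro p
    rw [hω]
    calc m = Real.sqrt (m ^ 2) := by rw [Real.sqrt_sq hm.le]
    _ ≤ Real.sqrt (‖p‖ ^ 2 + m ^ 2) := Real.sqrt_le_sqrt (le_add_of_nonneg_left (sq_nonneg _))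
  have hωcont : Continuous ω := by
    apply Real.continuous_sqrt.comp
    continuity
  have h2ωpos : ∀ p, 0 < 2 * ω p := fun p => by have := hωpos p; linarith
  -- the bound
  obtain ⟨M, hM0', hM⟩ := ψ.decay 0 0
  simp only [pow_zero, norm_iteratedFDeriv_zero, one_mul] at hM
  have hM0 : 0 ≤ M := hM0'.le
  set B : EuclideanSpace ℝ (Fin k) → ℝ := fun p => (2 * m)⁻¹ * (M * ‖ψ (Λ • p)‖) with hB
  have hB0 : ∀ p, 0 ≤ B p := by
    intro p
    rw [hB]
    positivity
  have hBint : Integrable B := by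
    apply Integrable.const_mul
    apply Integrable.const_mul
    exact (integrable_comp_smul_iff volume (fun x => ‖ψ x‖) hΛ.ne').2 ψ.integrable.norm
  have hFle : ∀ q p, |F q p| ≤ B p := by
    intro q p
    have hgle : |g p| ≤ ‖ψ (Λ • p)‖ := by
      rw [hg]
      exact Complex.abs_re_le_norm _
    have h1 : |F q p| ≤ (2 * ω p)⁻¹ * (g p) ^ 2 := by
      rw [hF, abs_mul, abs_mul]
      rw [abs_of_nonneg (inv_nonneg.2 (h2ωpos p).le), abs_sq]
      have hc := abs_cos_le_one ((⟪q.2, p⟫ : ℝ) - ω p * q.1)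
      have hinv : (0:ℝ) ≤ (2 * ω p)⁻¹ := inv_nonneg.2 (h2ωpos p).le
      calc (2 * ω p)⁻¹ * |Real.cos ((⟪q.2, p⟫ : ℝ) - ω p * q.1)| * (g p) ^ 2
          ≤ (2 * ω p)⁻¹ * 1 * (g p) ^ 2 :=
            mul_le_mul_of_nonneg_right (mul_le_mul_of_nonneg_left hc hinv) (sq_nonneg _)
      _ = (2 * ω p)⁻¹ * (g p) ^ 2 := by ring
    refine h1.trans ?_
    have h2 : (2 * ω p)⁻¹ ≤ (2 * m)⁻¹ := by
      apply inv_anti₀ (by positivity)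
      have := hωm p; linarith
    have h3 : (g p) ^ 2 ≤ M * ‖ψ (Λ • p)‖ := by
      have hgM : |g p| ≤ M := hgle.trans (hM _)
      calc (g p) ^ 2 = |g p| * |g p| := by rw [← abs_mul, ← pow_two, abs_sq]
      _ ≤ M * ‖ψ (Λ • p)‖ := mul_le_mul hgM hgle (abs_nonneg _) (le_trans (abs_nonneg _) hgM)
    rw [hB]
    have h5 : (0:ℝ) ≤ (2 * m)⁻¹ := by positivity
    calc (2 * ω p)⁻¹ * (g p) ^ 2 ≤ (2 * m)⁻¹ * (g p) ^ 2 :=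
          mul_le_mul_of_nonneg_right h2 (sq_nonneg _)
    _ ≤ (2 * m)⁻¹ * (M * ‖ψ (Λ • p)‖) := mul_le_mul_of_nonneg_left h3 h5
  have hFcont : ∀ q, Continuous (F q) := by
    intro q
    rw [hF]
    apply Continuous.mul
    apply Continuous.mul
    · exact ((continuous_const.mul hωcont).inv₀ (fun p => (h2ωpos p).ne'))
    · apply Real.continuous_cos.comp
      exact (continuous_const.inner continuous_id).sub (hωcont.mul continuous_const)
    · exact (Complex.continuous_re.comp (ψ.continuous.comp (continuous_const_smul Λ))).pow 2
  have hFmeas : ∀ q, AEStronglyMeasurable (F q) volume := fun q => (hFcont q).aestronglyMeasurable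
  have hFint : ∀ q, Integrable (F q) := by
    intro q
    refine hBint.mono (hFmeas q) ?_
    filter_upwards with p
    rw [Real.norm_eq_abs, Real.norm_eq_abs, abs_of_nonneg (hB0 p)]
    exact hFle q p
  have hC0 : (0:ℝ) ≤ ((2 * Real.pi) ^ k)⁻¹ := by positivity
  refine ⟨?_, ?_, ?_, ?_⟩
  · -- continuity
    have hcont : Continuous fun q => ∫ p, F q p := by
      apply continuous_of_dominated hFmeas
        (fun q => Filter.Eventually.of_forall fun p => by
          rw [Real.norm_eq_abs]; exact hFle q p) hBint
      filter_upwards with p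
      apply Continuous.mul
      apply Continuous.mul
      · exact continuous_const
      · apply Real.continuous_cos.comp
        apply Continuous.sub
        · exact (continuous_snd.inner continuous_const)
        · exact continuous_const.mul continuous_fst
      · exact continuous_const
    have heq : wsKernel k m Λ χ = fun q => ((2 * Real.pi) ^ k)⁻¹ * ∫ p, F q p :=
      funext hws
    rw [heq]
    exact continuous_const.mul hcont
  · -- boundedness
    refine ⟨((2 * Real.pi) ^ k)⁻¹ * ∫ p, B p, fun q => ?_⟩
    rw [hws q, abs_mul, abs_of_nonneg hC0]
    apply mul_le_mul_of_nonneg_left _ hC0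
    calc |∫ p, F q p| ≤ ∫ p, |F q p| := by
          simpa [Real.norm_eq_abs] using norm_integral_le_integral_norm (F q)
    _ ≤ ∫ p, B p := integral_mono (hFint q).abs hBint (fun p => hFle q p)
  · -- evenness
    intro q
    rw [hws, hws]
    congr 1
    apply integral_congr_ae
    filter_upwards with p
    simp only [hF]
    have h1 : (⟪(-q).2, p⟫ : ℝ) = -(⟪q.2, p⟫ : ℝ) := by
      rw [Prod.snd_neg, inner_neg_left]
    have h2 : (-q).1 = -q.1 := rfl
    rw [h1, h2,
      show -(⟪q.2, p⟫:ℝ) - ω p * -q.1 = -((⟪q.2, p⟫:ℝ) - ω p * q.1) by ring, Real.cos_neg]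
  · -- positive semidefiniteness
    intro r z c
    set θ : Fin r → EuclideanSpace ℝ (Fin k) → ℝ :=
      fun i p => (⟪(z i).2, p⟫ : ℝ) - ω p * (z i).1 with hθ
    set f : EuclideanSpace ℝ (Fin k) → ℝ := fun p => (2 * ω p)⁻¹ * (g p) ^ 2 with hf
    have hFθ : ∀ i j p, F (z i - z j) p =
        f p * (Real.cos (θ i p) * Real.cos (θ j p) + Real.sin (θ i p) * Real.sin (θ j p)) := by
      intro i j p
      simp only [hF, hf, hθ]
      have h1 : (⟪(z i - z j).2, p⟫ : ℝ) = (⟪(z i).2, p⟫ : ℝ) - (⟪(z j).2, p⟫ : ℝ) := by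
        rw [Prod.snd_sub, inner_sub_left]
      have h2 : (z i - z j).1 = (z i).1 - (z j).1 := rfl
      rw [h1, h2,
        show (⟪(z i).2, p⟫ : ℝ) - (⟪(z j).2, p⟫ : ℝ) - ω p * ((z i).1 - (z j).1)
          = ((⟪(z i).2, p⟫ : ℝ) - ω p * (z i).1) - ((⟪(z j).2, p⟫ : ℝ) - ω p * (z j).1) by ring,
        Real.cos_sub]
      ring
    have hGint : ∀ i j : Fin r, Integrable (fun p => c i * c j * F (z i - z j) p) :=
      fun i j => (hFint (z i - z j)).const_mul _
    have key : ∑ i : Fin r, ∑ j : Fin r, c i * c j * wsKernel k m Λ χ (z i - z j)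
        = ((2 * Real.pi) ^ k)⁻¹ *
          ∫ p, ∑ i : Fin r, ∑ j : Fin r, c i * c j * F (z i - z j) p := by
      rw [integral_finset_sum _ (fun i _ => integrable_finset_sum _ (fun j _ => hGint i j)),
        Finset.mul_sum]
      apply Finset.sum_congr rfl
      intro i _
      rw [integral_finset_sum _ (fun j _ => hGint i j), Finset.mul_sum]
      apply Finset.sum_congr rfl
      intro j _
      rw [hws, integral_const_mul]
      ring
    rw [key]
    apply mul_nonneg hC0
    apply integral_nonneg
    intro p
    have hsum : ∑ i : Fin r, ∑ j : Fin r, c i * c j * F (z i - z j) p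
        = f p * ((∑ i : Fin r, c i * Real.cos (θ i p)) ^ 2
            + (∑ i : Fin r, c i * Real.sin (θ i p)) ^ 2) := by
      simp only [hFθ]
      rw [pow_two, pow_two, Finset.sum_mul_sum, Finset.sum_mul_sum]
      rw [mul_add, Finset.mul_sum, Finset.mul_sum, ← Finset.sum_add_distrib]
      apply Finset.sum_congr rfl
      intro i _
      rw [Finset.mul_sum, Finset.mul_sum, ← Finset.sum_add_distrib]
      apply Finset.sum_congr rfl
      intro j _
      ring
    show (0:ℝ) ≤ ∑ i : Fin r, ∑ j : Fin r, c i * c j * F (z i - z j) p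
    rw [hsum]
    have hf0 : 0 ≤ f p := by
      rw [hf]
      exact mul_nonneg (inv_nonneg.2 (h2ωpos p).le) (sq_nonneg _)
    positivity
end

section
/- Let d ≥ 1 and let w_s : ℝ^d × ℝ^d → ℝ be a continuous, bounded, symmetric, translation invariant, pointwise positive semidefinite kernel with W := w_s(x,x). Let A > 0, let g : ℝ^d → ℝ be nonnegative and integrable, and let f : ℝ → ℝ be nonnegative, integrable, with support contained in [−A, A]. For points x̃_i = (x_i, a_i) ∈ ℝ^d × ℝ define U(x̃_1,…,x̃_k) := ∑_{1≤i<j≤k} a_i a_j w_s(x_i,x_j). Then for every n ≥ 0, every m ≥ 0, and every x̃_1,…,x̃_n with |a_i| ≤ A for all i, one has ∫_{(ℝ^d × ℝ)^m} (∏_{j=1}^m g(y_j) f(b_j)) · e^{−U(x̃_1,…,x̃_n,ỹ_1,…,ỹ_m)} dỹ_1 … dỹ_m ≤ exp( (∑_{i=1}^n a_i^2 + m A^2) · W/2 ) · (‖g‖_{L^1} ‖f‖_{L^1})^m, where ỹ_j = (y_j, b_j). In particular, for every λ ≥ 0 the series ∑_{m≥0} (λ^{n+m}/m!) ∫ (∏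 g(y_j) f(b_j)) e^{−U(x̃,ỹ)} dỹ converges absolutely. -/
open MeasureTheory Finset Real

/-- A spacetime point together with a charge: `x̃ = (x, a) ∈ ℝ^d × ℝ`. -/
abbrev ChargedPt (d : ℕ) := (Fin d → ℝ) × ℝ

/-- The interaction energy `U(x̃₁,…,x̃ₖ) = ∑_{i<j} aᵢ aⱼ w(xᵢ,xⱼ)` of a configuration of
charged points. -/
noncomputable def interactionEnergy {d : ℕ} (w : (Fin d → ℝ) → (Fin d → ℝ) → ℝ)
    {k : ℕ} (z : Fin k → ChargedPt d) : ℝ :=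
  ∑ p ∈ Finset.univ.filter (fun p : Fin k × Fin k => p.1 < p.2),
    (z p.1).2 * (z p.2).2 * w (z p.1).1 (z p.2).1

/-- The product weight `∏ⱼ g(yⱼ) f(bⱼ)` of a configuration of charged points. -/
noncomputable def configWeight {d : ℕ} (g : (Fin d → ℝ) → ℝ) (f : ℝ → ℝ)
    {m : ℕ} (y : Fin m → ChargedPt d) : ℝ :=
  ∏ j, g (y j).1 * f (y j).2

/-!
Writing the positive semidefinite quadratic form with charges `aᵢ` as
`∑ᵢ ∑ⱼ aᵢ aⱼ w(xᵢ, xⱼ) = 2 U + W ∑ᵢ aᵢ²` gives `-U ≤ W/2 ∑ᵢ aᵢ²`. Wherever the product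
weight is nonzero the integrated charges lie in `supp f ⊆ [-A, A]`, so the Boltzmann factor is at
most `exp((∑ aᵢ² + m A²) W/2)`, and what remains is the integral of the product weight, which
factorises by Fubini. Summability follows by comparison with the exponential series.
-/

theorem Finset.sum_sum_eq_sum_lt_add_sum_diag {ι M : Type*} [Fintype ι] [LinearOrder ι]
    [AddCommMonoid M] (F : ι → ι → M) :
    ∑ i, ∑ j, F i j =
      ∑ p ∈ univ.filter (fun p : ι × ι => p.1 < p.2), (F p.1 p.2 + F p.2 p.1) + ∑ i, F i i := by
  have split : ∀ i j, F i j =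
      ((if i < j then F i j else 0) + if j < i then F i j else 0) + if i = j then F i j else 0 := by
    intro i j
    rcases lt_trichotomy i j with h | rfl | h
    · simp [h, h.not_gt, h.ne]
    · simp
    · simp [h, h.not_gt, h.ne']
  have upper : ∑ i, ∑ j, (if j < i then F i j else 0) = ∑ i, ∑ j, if i < j then F j i else 0 :=
    Finset.sum_comm
  rw [Finset.sum_filter, Fintype.sum_prod_type]
  simp_rw [ite_add_zero, Finset.sum_add_distrib, ← upper]
  conv_lhs => enter [2, i, 2, j]; rw [split i j]
  simp only [Finset.sum_add_distrib, Finset.sum_ite_eq, Finset.mem_univ, if_true]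

def IsPosSemidefKernel_s8 {X : Type*} (w : X → X → ℝ) : Prop :=
  ∀ (k : ℕ) (z : Fin k → X) (c : Fin k → ℝ), 0 ≤ ∑ i, ∑ j, c i * c j * w (z i) (z j)

theorem IsPosSemidefKernel_s8.diag_nonneg {X : Type*} {w : X → X → ℝ} (hw : IsPosSemidefKernel_s8 w)
    (x : X) : 0 ≤ w x x := by
  simpa using hw 1 (fun _ => x) (fun _ => 1)

section Kernel

variable {d : ℕ} {w : (Fin d → ℝ) → (Fin d → ℝ) → ℝ} {W : ℝ}

theorem sum_sum_mul_kernel_eq (hw_symm : ∀ x y, w x y = w y x) (hW : ∀ x, w x x = W)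
    {k : ℕ} (z : Fin k → ChargedPt d) :
    ∑ i, ∑ j, (z i).2 * (z j).2 * w (z i).1 (z j).1 =
      2 * interactionEnergy w z + (∑ i, (z i).2 ^ 2) * W := by
  rw [Finset.sum_sum_eq_sum_lt_add_sum_diag, interactionEnergy, Finset.mul_sum, Finset.sum_mul]
  congr 1 <;> refine Finset.sum_congr rfl fun p _ => ?_
  · rw [hw_symm (z p.2).1]; ring
  · rw [hW]; ring

theorem neg_interactionEnergy_le (hw_symm : ∀ x y, w x y = w y x)
    (hw_psd : IsPosSemidefKernel_s8 w)
    (hW : ∀ x, w x x = W) {k : ℕ} (z : Fin k → ChargedPt d) :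
    -interactionEnergy w z ≤ (∑ i, (z i).2 ^ 2) * W / 2 := by
  have := hw_psd k (fun i => (z i).1) (fun i => (z i).2)
  rw [sum_sum_mul_kernel_eq hw_symm hW] at this
  linarith

theorem neg_interactionEnergy_append_le (hw_symm : ∀ x y, w x y = w y x)
    (hw_psd : IsPosSemidefKernel_s8 w)
    (hW : ∀ x, w x x = W) {A : ℝ} {n m : ℕ} (z : Fin n → ChargedPt d)
    {y : Fin m → ChargedPt d} (hy : ∀ j, |(y j).2| ≤ A) :
    -interactionEnergy w (Fin.append z y) ≤ (∑ i, (z i).2 ^ 2 + m * A ^ 2) * W / 2 := by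
  have hW_nonneg : 0 ≤ W := hW 0 ▸ hw_psd.diag_nonneg 0
  have hy_sq : ∑ j, (y j).2 ^ 2 ≤ m * A ^ 2 :=
    calc ∑ j, (y j).2 ^ 2 ≤ ∑ _j : Fin m, A ^ 2 :=
          Finset.sum_le_sum fun j _ => sq_abs (y j).2 ▸ pow_le_pow_left₀ (abs_nonneg _) (hy j) 2
      _ = m * A ^ 2 := by simp
  calc -interactionEnergy w (Fin.append z y)
      ≤ (∑ i, (Fin.append z y i).2 ^ 2) * W / 2 := neg_interactionEnergy_le hw_symm hw_psd hW _
    _ = (∑ i, (z i).2 ^ 2 + ∑ j, (y j).2 ^ 2) * W / 2 := by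
      simp [Fin.sum_univ_add, Fin.append_left, Fin.append_right]
    _ ≤ (∑ i, (z i).2 ^ 2 + m * A ^ 2) * W / 2 := by gcongr

end Kernel

section Weight

variable {d m : ℕ} {g : (Fin d → ℝ) → ℝ} {f : ℝ → ℝ}

theorem configWeight_nonneg (hg : ∀ x, 0 ≤ g x) (hf : ∀ b, 0 ≤ f b) (y : Fin m → ChargedPt d) :
    0 ≤ configWeight g f y :=
  Finset.prod_nonneg fun _ _ => mul_nonneg (hg _) (hf _)

theorem abs_charge_le_of_configWeight_ne_zero {A : ℝ} (hf : Function.support f ⊆ Set.Icc (-A) A)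
    {y : Fin m → ChargedPt d} (hy : configWeight g f y ≠ 0) (j : Fin m) : |(y j).2| ≤ A :=
  abs_le.mpr (hf (right_ne_zero_of_mul (Finset.prod_ne_zero_iff.mp hy j (Finset.mem_univ j))))

theorem integrable_configWeight (hg : Integrable g) (hf : Integrable f) :
    Integrable (configWeight g f (m := m)) :=
  Integrable.fintype_prod (f := fun _ (p : ChargedPt d) => g p.1 * f p.2) fun _ =>
    hg.mul_prod hf

theorem integral_configWeight (g : (Fin d → ℝ) → ℝ) (f : ℝ → ℝ) :
    ∫ y : Fin m → ChargedPt d, configWeight g f y = ((∫ x, g x) * ∫ b, f b) ^ m := by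
  calc ∫ y : Fin m → ChargedPt d, configWeight g f y = (∫ p : ChargedPt d, g p.1 * f p.2) ^ m := by
        simpa [configWeight] using integral_fintype_prod_volume_eq_pow (ι := Fin m)
          (fun p : ChargedPt d => g p.1 * f p.2)
    _ = ((∫ x, g x) * ∫ b, f b) ^ m := congrArg (· ^ m) (integral_prod_mul g f)

end Weight

theorem integral_configWeight_mul_exp_le {d : ℕ} {w : (Fin d → ℝ) → (Fin d → ℝ) → ℝ} {W : ℝ}
    (hw_symm : ∀ x y, w x y = w y x)
    (hw_psd : IsPosSemidefKernel_s8 w)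
    (hW : ∀ x, w x x = W) {A : ℝ} {g : (Fin d → ℝ) → ℝ} (hg_int : Integrable g)
    (hg_nonneg : ∀ x, 0 ≤ g x) {f : ℝ → ℝ} (hf_int : Integrable f) (hf_nonneg : ∀ b, 0 ≤ f b)
    (hf_supp : Function.support f ⊆ Set.Icc (-A) A) {n : ℕ} (z : Fin n → ChargedPt d) (m : ℕ) :
    ∫ y : Fin m → ChargedPt d, configWeight g f y * exp (-interactionEnergy w (Fin.append z y))
      ≤ exp ((∑ i, (z i).2 ^ 2 + m * A ^ 2) * W / 2) * ((∫ x, g x) * ∫ b, f b) ^ m := by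
  set E := (∑ i, (z i).2 ^ 2 + m * A ^ 2) * W / 2
  have pointwise : ∀ y : Fin m → ChargedPt d,
      configWeight g f y * exp (-interactionEnergy w (Fin.append z y))
        ≤ configWeight g f y * exp E := by
    intro y
    rcases eq_or_ne (configWeight g f y) 0 with hy | hy
    · simp [hy]
    · exact mul_le_mul_of_nonneg_left
        (exp_le_exp.mpr (neg_interactionEnergy_append_le hw_symm hw_psd hW z
          (abs_charge_le_of_configWeight_ne_zero hf_supp hy)))
        (configWeight_nonneg hg_nonneg hf_nonneg y)
  calc _ ≤ ∫ y : Fin m → ChargedPt d, configWeight g f y * exp E :=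
        integral_mono_of_nonneg
          (ae_of_all _ fun y => mul_nonneg (configWeight_nonneg hg_nonneg hf_nonneg y)
            (exp_pos _).le)
          ((integrable_configWeight hg_int hf_int).mul_const _) (ae_of_all _ pointwise)
    _ = exp E * ((∫ x, g x) * ∫ b, f b) ^ m := by
      rw [integral_mul_const, integral_configWeight, mul_comm]

theorem summable_abs_pow_div_factorial_mul {I : ℕ → ℝ} {B R : ℝ}
    (hI : ∀ m, |I m| ≤ B * R ^ m) (lam : ℝ) (n : ℕ) :
    Summable fun m => |lam ^ (n + m) / m.factorial * I m| := by
  refine .of_nonneg_of_le (fun m => abs_nonneg _) (fun m => ?_)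
    ((Real.summable_pow_div_factorial (|lam| * R)).mul_left (|lam| ^ n * B))
  calc |lam ^ (n + m) / m.factorial * I m| = |lam| ^ (n + m) / m.factorial * |I m| := by
        rw [abs_mul, abs_div, abs_pow, Nat.abs_cast]
    _ ≤ |lam| ^ (n + m) / m.factorial * (B * R ^ m) := by gcongr; exact hI m
    _ = |lam| ^ n * B * ((|lam| * R) ^ m / m.factorial) := by rw [pow_add, mul_pow]; ring

theorem external_points_estimate_general
    (d : ℕ)
    (w : (Fin d → ℝ) → (Fin d → ℝ) → ℝ) (W : ℝ)
    (hw_symm : ∀ x y : Fin d → ℝ, w x y = w y x)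
    (hw_psd : ∀ (k : ℕ) (z : Fin k → (Fin d → ℝ)) (c : Fin k → ℝ),
      0 ≤ ∑ i : Fin k, ∑ j : Fin k, c i * c j * w (z i) (z j))
    (hW : ∀ x : Fin d → ℝ, w x x = W)
    (A : ℝ)
    (g : (Fin d → ℝ) → ℝ) (hg_int : Integrable g) (hg_nonneg : ∀ x, 0 ≤ g x)
    (f : ℝ → ℝ) (hf_int : Integrable f) (hf_nonneg : ∀ b, 0 ≤ f b)
    (hf_supp : Function.support f ⊆ Set.Icc (-A) A) :
    (∀ (n m : ℕ) (z : Fin n → ChargedPt d), (∀ i, |(z i).2| ≤ A) →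
      (∫ y : Fin m → ChargedPt d,
          configWeight g f y * Real.exp (-(interactionEnergy w (Fin.append z y))))
        ≤ Real.exp ((∑ i, (z i).2 ^ 2 + m * A ^ 2) * W / 2) *
            ((∫ x, |g x|) * (∫ b, |f b|)) ^ m) ∧
    (∀ (n : ℕ) (z : Fin n → ChargedPt d), (∀ i, |(z i).2| ≤ A) →
      ∀ lam : ℝ, 0 ≤ lam →
        Summable (fun m : ℕ =>
          |lam ^ (n + m) / m.factorial *
            ∫ y : Fin m → ChargedPt d,
              configWeight g f y * Real.exp (-(interactionEnergy w (Fin.append z y)))|)) := by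
  have hg_abs : (fun x => |g x|) = g := funext fun x => abs_of_nonneg (hg_nonneg x)
  have hf_abs : (fun b => |f b|) = f := funext fun b => abs_of_nonneg (hf_nonneg b)
  have bound : ∀ (n m : ℕ) (z : Fin n → ChargedPt d),
      (∫ y : Fin m → ChargedPt d, configWeight g f y * exp (-interactionEnergy w (Fin.append z y)))
        ≤ exp ((∑ i, (z i).2 ^ 2 + m * A ^ 2) * W / 2) * ((∫ x, g x) * ∫ b, f b) ^ m :=
    fun n m z => integral_configWeight_mul_exp_le hw_symm hw_psd hW hg_int hg_nonneg hf_int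
      hf_nonneg hf_supp z m
  refine ⟨fun n m z _ => by rw [hg_abs, hf_abs]; exact bound n m z, fun n z _ lam _ => ?_⟩
  refine summable_abs_pow_div_factorial_mul (B := exp ((∑ i, (z i).2 ^ 2) * W / 2))
    (R := exp (A ^ 2 * W / 2) * ((∫ x, g x) * ∫ b, f b)) (fun m => ?_) lam n
  rw [abs_of_nonneg (integral_nonneg fun y => mul_nonneg
    (configWeight_nonneg hg_nonneg hf_nonneg y) (exp_pos _).le)]
  refine (bound n m z).trans_eq ?_
  rw [mul_pow (exp _), ← exp_nat_mul, ← mul_assoc, ← exp_add]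
  ring_nf

/-- Vertex-operator estimate with external points: for a continuous, bounded,
symmetric, translation invariant, pointwise positive semidefinite kernel with diagonal `W`,
nonnegative integrable `g`, and nonnegative integrable `f` supported in `[−A,A]`, the partially
integrated Boltzmann weight with `n` fixed external charged points (charges bounded by `A`) is
bounded by `exp((∑ aᵢ² + m A²) W/2) (‖g‖₁‖f‖₁)^m`;  in particular for every `λ ≥ 0` the series
`∑ₘ (λ^{n+m}/m!) ∫ ⋯ dỹ` converges absolutely. -/
theorem external_points_estimate
    (d : ℕ) (hd : 1 ≤ d)
    (w : (Fin d → ℝ) → (Fin d → ℝ) → ℝ) (W : ℝ)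
    (hw_cont : Continuous fun p : (Fin d → ℝ) × (Fin d → ℝ) => w p.1 p.2)
    (hw_bdd : ∃ C : ℝ, ∀ x y : Fin d → ℝ, |w x y| ≤ C)
    (hw_symm : ∀ x y : Fin d → ℝ, w x y = w y x)
    (hw_transl : ∀ x y z : Fin d → ℝ, w (x + z) (y + z) = w x y)
    (hw_psd : ∀ (k : ℕ) (z : Fin k → (Fin d → ℝ)) (c : Fin k → ℝ),
      0 ≤ ∑ i : Fin k, ∑ j : Fin k, c i * c j * w (z i) (z j))
    (hW : ∀ x : Fin d → ℝ, w x x = W)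
    (A : ℝ) (hA : 0 < A)
    (g : (Fin d → ℝ) → ℝ) (hg_int : Integrable g) (hg_nonneg : ∀ x, 0 ≤ g x)
    (f : ℝ → ℝ) (hf_int : Integrable f) (hf_nonneg : ∀ b, 0 ≤ f b)
    (hf_supp : Function.support f ⊆ Set.Icc (-A) A) :
    (∀ (n m : ℕ) (z : Fin n → ChargedPt d), (∀ i, |(z i).2| ≤ A) →
      (∫ y : Fin m → ChargedPt d,
          configWeight g f y * Real.exp (-(interactionEnergy w (Fin.append z y))))
        ≤ Real.exp ((∑ i, (z i).2 ^ 2 + m * A ^ 2) * W / 2) *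
            ((∫ x, |g x|) * (∫ b, |f b|)) ^ m) ∧
    (∀ (n : ℕ) (z : Fin n → ChargedPt d), (∀ i, |(z i).2| ≤ A) →
      ∀ lam : ℝ, 0 ≤ lam →
        Summable (fun m : ℕ =>
          |lam ^ (n + m) / m.factorial *
            ∫ y : Fin m → ChargedPt d,
              configWeight g f y * Real.exp (-(interactionEnergy w (Fin.append z y)))|)) :=
  external_points_estimate_general d w W hw_symm hw_psd hW A g hg_int hg_nonneg f hf_int hf_nonneg
    hf_supp
end

section
/- Let d ≥ 1 and let w_s : ℝ^d × ℝ^d → ℝ be a continuous, bounded, symmetric, translation invariant, pointwise positive semidefinite kernel. Let A > 0, let g : ℝ^d → ℝ be nonnegative and integrable, and let f : ℝ → ℝ be nonnegative, integrable, with support in [−A,A]. Write x̃ = (x,a) ∈ ℝ^d × ℝ and U(x̃_1,…,x̃_k) := ∑_{1≤i<j≤k} a_i a_j w_s(x_i,x_j). Define σ_0 := 1, σ_m := (1/m!) ∫_{(ℝ^d×ℝ)^m} (∏_{j=1}^m g(y_j) f(b_j)) e^{−U(ỹ)} dỹ for m ≥ 1, and ν_{n,m}(x̃_1,…,x̃_n)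 := (1/m!) ∫ (∏_{j=1}^m g(y_j) f(b_j)) e^{−U(x̃_1,…,x̃_n,ỹ_1,…,ỹ_m)} dỹ, and define the perturbative correlation functions recursively in ℓ by ρ_{n,ℓ} := ν_{n,ℓ} − ∑_{j=1}^{ℓ} σ_j · ρ_{n,ℓ−j} (so that ρ_{n,0} = e^{−U}); set also ρ_{0,ℓ} := 1 if ℓ = 0 and 0 otherwise. Then for every n ≥ 1, ℓ ≥ 0, and all x̃_1,…,x̃_n with |a_i| ≤ A, the perturbative Kirkwood–Salsburg recursion holds: ρ_{n,ℓ}(x̃_1,…,x̃_n) = e^{−∑_{j=2}^n a_1 a_j w_s(x_1,x_j)} · ∑_{s=0}^{ℓ} (1/s!) ∫_{(ℝ^d×ℝ)^s} (∏_{k=1}^s g(y_k) f(b_k) (e^{−a_1 b_k w_s(x_1,y_k)} − 1)) · ρ_{n−1+s, ℓ−s}(x̃_2,…,x̃_n,ỹ_1,…,ỹ_s) dỹ. -/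
open MeasureTheory Finset Real

/-- `σ_m = (1/m!) ∫ (∏ g f) e^{−U(ỹ)} dỹ`, the `m`-th coefficient of the dominating
partition function. -/
noncomputable def sigmaCoeff {d : ℕ} (w : (Fin d → ℝ) → (Fin d → ℝ) → ℝ)
    (g : (Fin d → ℝ) → ℝ) (f : ℝ → ℝ) (m : ℕ) : ℝ :=
  ((m.factorial : ℝ))⁻¹ *
    ∫ y : Fin m → ChargedPt d, configWeight g f y * Real.exp (-(interactionEnergy w y))

/-- `ν_{n,m}(x̃) = (1/m!) ∫ (∏ g f) e^{−U(x̃,ỹ)} dỹ`, the coefficients of the unnormalized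
correlation functions. -/
noncomputable def nuCoeff {d : ℕ} (w : (Fin d → ℝ) → (Fin d → ℝ) → ℝ)
    (g : (Fin d → ℝ) → ℝ) (f : ℝ → ℝ) (n m : ℕ) (z : Fin n → ChargedPt d) : ℝ :=
  ((m.factorial : ℝ))⁻¹ *
    ∫ y : Fin m → ChargedPt d,
      configWeight g f y * Real.exp (-(interactionEnergy w (Fin.append z y)))

/-!
The recursion `ρ_{n,ℓ} = ν_{n,ℓ} - ∑_{j ≥ 1} σ_j ρ_{n,ℓ-j}` says that `ρ_n` is the deconvolution
of `ν_n` by `σ`. Writing each Boltzmann factor `e^{-a₁ b w(x₁, y)}` between the first point and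
an integrated point as `1 + (e^{-a₁ b w(x₁, y)} - 1)`, expanding the product and using the
symmetry of the integrand in the integrated points shows that the `ν_{n,m}` themselves satisfy
the Kirkwood–Salsburg recursion `ν_{n,m} = ∑_s K_s ν_{n-1+s,m-s}` with linear maps `K_s`.
Deconvolution commutes with such shifted sums, so the `ρ_{n,ℓ}` satisfy it as well. The maps
`K_s` are linear on functions that are continuous and bounded on configurations with charges in
`[-A, A]`, the support of `f`; the `ν` and hence the `ρ` are of this kind.
-/

section Deconvolution

variable {R M N : Type*} [Ring R] [AddCommGroup M] [Module R M] [AddCommGroup N] [Module R N]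

/-- `ρ` is the coefficient sequence of `ν / (1 + ∑_{j ≥ 1} σ_j λ^j)`. -/
def IsDeconvolution (σ : ℕ → R) (ν ρ : ℕ → M) : Prop :=
  ∀ ℓ, ρ ℓ = ν ℓ - ∑ j ∈ Icc 1 ℓ, σ j • ρ (ℓ - j)

variable {σ : ℕ → R} {ν ρ : ℕ → M}

theorem IsDeconvolution.unique {ρ' : ℕ → M} (h : IsDeconvolution σ ν ρ)
    (h' : IsDeconvolution σ ν ρ') : ρ = ρ' := by
  funext ℓ
  induction ℓ using Nat.strong_induction_on with
  | _ ℓ ih =>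
    rw [h ℓ, h' ℓ]
    congr 1
    refine sum_congr rfl fun j hj => ?_
    rw [ih (ℓ - j) (by simp only [mem_Icc] at hj; omega)]

theorem IsDeconvolution.mem {S : Submodule R M} (h : IsDeconvolution σ ν ρ)
    (hν : ∀ ℓ, ν ℓ ∈ S) (ℓ : ℕ) : ρ ℓ ∈ S := by
  induction ℓ using Nat.strong_induction_on with
  | _ ℓ ih =>
    rw [h ℓ]
    refine S.sub_mem (hν ℓ) (S.sum_mem fun j hj => S.smul_mem _ (ih _ ?_))
    simp only [mem_Icc] at hj
    omega

theorem IsDeconvolution.map {S : Submodule R M} (L : S →ₗ[R] N) (h : IsDeconvolution σ ν ρ)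
    (hν : ∀ ℓ, ν ℓ ∈ S) :
    IsDeconvolution σ (fun ℓ => L ⟨ν ℓ, hν ℓ⟩) (fun ℓ => L ⟨ρ ℓ, h.mem hν ℓ⟩) := by
  intro ℓ
  have hρ : (⟨ρ ℓ, h.mem hν ℓ⟩ : S) =
      ⟨ν ℓ, hν ℓ⟩ - ∑ j ∈ Icc 1 ℓ, σ j • ⟨ρ (ℓ - j), h.mem hν (ℓ - j)⟩ :=
    Subtype.ext (by simpa using h ℓ)
  simp only [hρ, map_sub, map_sum, map_smul]

theorem IsDeconvolution.sum_range {I J : ℕ → ℕ → M} (h : ∀ s, IsDeconvolution σ (I s) (J s)) :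
    IsDeconvolution σ (fun ℓ => ∑ s ∈ range (ℓ + 1), I s (ℓ - s))
      (fun ℓ => ∑ s ∈ range (ℓ + 1), J s (ℓ - s)) := by
  intro ℓ
  have hswap : ∑ j ∈ Icc 1 ℓ, σ j • ∑ s ∈ range (ℓ - j + 1), J s (ℓ - j - s) =
      ∑ s ∈ range (ℓ + 1), ∑ j ∈ Icc 1 (ℓ - s), σ j • J s (ℓ - s - j) := by
    simp_rw [smul_sum]
    refine (sum_comm' fun j s => ?_).trans
      (sum_congr rfl fun s _ => sum_congr rfl fun j _ => by rw [Nat.sub_right_comm])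
    simp only [mem_Icc, mem_range]
    omega
  rw [hswap, ← sum_sub_distrib]
  exact sum_congr rfl fun s _ => h s (ℓ - s)

end Deconvolution

section BoundedContinuousOn

variable {X Y : Type*} [TopologicalSpace X] [TopologicalSpace Y]

def boundedContinuousOn (K : Set X) : Subalgebra ℝ (X → ℝ) where
  carrier := {φ | ContinuousOn φ K ∧ ∃ C, ∀ x ∈ K, |φ x| ≤ C}
  mul_mem' := by
    rintro φ ψ ⟨hφ, C, hC⟩ ⟨hψ, D, hD⟩
    refine ⟨hφ.mul hψ, C * D, fun x hx => ?_⟩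
    rw [Pi.mul_apply, abs_mul]
    exact mul_le_mul (hC x hx) (hD x hx) (abs_nonneg _) ((abs_nonneg _).trans (hC x hx))
  add_mem' := by
    rintro φ ψ ⟨hφ, C, hC⟩ ⟨hψ, D, hD⟩
    exact ⟨hφ.add hψ, C + D, fun x hx => (abs_add_le _ _).trans (add_le_add (hC x hx) (hD x hx))⟩
  algebraMap_mem' c := ⟨continuousOn_const, |c|, fun _ _ => le_rfl⟩

variable {K : Set X} {φ : X → ℝ}

theorem comp_mem_boundedContinuousOn (hφ : φ ∈ boundedContinuousOn K) {L : Set Y} {h : Y → X}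
    (hh : Continuous h) (hLK : Set.MapsTo h L K) : φ ∘ h ∈ boundedContinuousOn L := by
  obtain ⟨hφ, C, hC⟩ := hφ
  exact ⟨hφ.comp hh.continuousOn hLK, C, fun y hy => hC (h y) (hLK hy)⟩

variable [MeasurableSpace X] [OpensMeasurableSpace X] {μ : Measure X} {G : X → ℝ}

theorem MeasureTheory.Integrable.mul_of_mem_boundedContinuousOn (hG : Integrable G μ)
    (hK : MeasurableSet K) (hGK : Function.support G ⊆ K) (hφ : φ ∈ boundedContinuousOn K) :
    Integrable (fun x => G x * φ x) μ := by
  obtain ⟨hφ, C, hC⟩ := hφ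
  refine (integrableOn_iff_integrable_of_support_subset ?_).mp <|
    hG.integrableOn.mul_bdd (hφ.aestronglyMeasurable hK) ((ae_restrict_iff' hK).mpr
      (Filter.Eventually.of_forall hC))
  exact (Function.support_mul_subset_left _ _).trans hGK

theorem integral_mul_mem_boundedContinuousOn {P : Type*} [TopologicalSpace P]
    [FirstCountableTopology P] (hG : Integrable G μ) (hGK : Function.support G ⊆ K) {Φ : P → X → ℝ}
    (hΦ : Continuous (Function.uncurry Φ)) {L : Set P} {B : ℝ}
    (hB : ∀ p ∈ L, ∀ x ∈ K, |Φ p x| ≤ B) :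
    (fun p => ∫ x, G x * Φ p x ∂μ) ∈ boundedContinuousOn L := by
  have hbound : ∀ p ∈ L, ∀ x, ‖G x * Φ p x‖ ≤ ‖G x‖ * B := by
    intro p hp x
    by_cases hx : x ∈ K
    · rw [norm_mul]
      exact mul_le_mul_of_nonneg_left (hB p hp x hx) (norm_nonneg _)
    · simp [Function.notMem_support.mp fun h => hx (hGK h)]
  refine ⟨continuousOn_of_dominated (fun p _ => hG.aestronglyMeasurable.mul
    (hΦ.comp (Continuous.prodMk_right p)).aestronglyMeasurable)
    (fun p hp => .of_forall (hbound p hp)) (hG.norm.mul_const B) (.of_forall fun x =>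
      (continuous_const.mul (hΦ.comp (Continuous.prodMk_left x))).continuousOn),
    ∫ x, ‖G x‖ * B ∂μ, fun p hp => ?_⟩
  exact (abs_integral_le_integral_abs).trans (integral_mono_of_nonneg
      (.of_forall fun x => abs_nonneg _) (hG.norm.mul_const B) (.of_forall (hbound p hp)))

end BoundedContinuousOn

section FinProduct

def MeasurableEquiv.finAppend (α : Type*) [MeasurableSpace α] (s t : ℕ) :
    (Fin s → α) × (Fin t → α) ≃ᵐ (Fin (s + t) → α) :=
  (MeasurableEquiv.sumPiEquivProdPi fun _ => α).symm.trans
    (MeasurableEquiv.piCongrLeft (fun _ => α) finSumFinEquiv)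

variable {α : Type*}

theorem MeasurableEquiv.finAppend_apply [MeasurableSpace α] {s t : ℕ}
    (p : (Fin s → α) × (Fin t → α)) : MeasurableEquiv.finAppend α s t p = Fin.append p.1 p.2 := by
  funext i
  refine Fin.addCases (fun j => ?_) (fun j => ?_) i
  · rw [Fin.append_left, ← finSumFinEquiv_apply_left]
    exact MeasurableEquiv.piCongrLeft_apply_apply (β := fun _ => α) finSumFinEquiv _ (.inl j)
  · rw [Fin.append_right, ← finSumFinEquiv_apply_right]
    exact MeasurableEquiv.piCongrLeft_apply_apply (β := fun _ => α) finSumFinEquiv _ (.inr j)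

variable [MeasureSpace α] [SigmaFinite (volume : Measure α)]

theorem measurePreserving_finAppend (s t : ℕ) :
    MeasurePreserving (MeasurableEquiv.finAppend α s t) volume volume :=
  (volume_measurePreserving_piCongrLeft (fun _ => α) finSumFinEquiv).comp
    (volume_measurePreserving_sumPiEquivProdPi_symm fun _ : Fin s ⊕ Fin t => α)

theorem integral_finAppend {s t : ℕ} {F : (Fin (s + t) → α) → ℝ} (hF : Integrable F) :
    ∫ x, F x = ∫ u : Fin s → α, ∫ v : Fin t → α, F (Fin.append u v) := by
  have hmp := measurePreserving_finAppend (α := α) s t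
  rw [← hmp.integral_comp' F, Measure.volume_eq_prod, integral_prod]
  · simp only [MeasurableEquiv.finAppend_apply]
  · rw [← Measure.volume_eq_prod]
    exact (hmp.integrable_comp_emb (MeasurableEquiv.measurableEmbedding _)).mpr hF

theorem integral_comp_perm {ι : Type*} [Fintype ι] (e : Equiv.Perm ι) (F : (ι → α) → ℝ) :
    ∫ x, F (x ∘ e) = ∫ x, F x := by
  rw [← (volume_measurePreserving_piCongrLeft (fun _ => α) e.symm).integral_comp' F]
  congr with x
  congr 1
  funext i
  simpa only [Function.comp_apply, Equiv.symm_apply_apply] using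
    (MeasurableEquiv.piCongrLeft_apply_apply (β := fun _ => α) e.symm x (e i)).symm

variable {ι : Type*} [Fintype ι] [DecidableEq ι] {u : α → ℝ} {F : (ι → α) → ℝ}

theorem integral_prod_mul_eq_of_card_eq (hF : ∀ (e : Equiv.Perm ι) y, F (y ∘ e) = F y)
    {S S' : Finset ι} (h : #S = #S') :
    ∫ y, (∏ k ∈ S, u (y k)) * F y = ∫ y, (∏ k ∈ S', u (y k)) * F y := by
  set e : Equiv.Perm ι := (equivOfCardEq h).extendSubtype
  rw [← integral_comp_perm e]
  congr with y
  rw [hF]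
  congr 1
  refine prod_equiv e (fun k => ⟨fun hk => Equiv.extendSubtype_mem _ k hk, fun hk => ?_⟩)
    fun _ _ => rfl
  by_contra hk'
  exact Equiv.extendSubtype_not_mem _ k hk' hk

/-- Expanding `∏ (1 + u)` over subsets, a symmetric integrand sees only the sizes of the
subsets. -/
theorem integral_prod_one_add_mul {m : ℕ} {F : (Fin m → α) → ℝ}
    (hF : ∀ (e : Equiv.Perm (Fin m)) y, F (y ∘ e) = F y)
    (hint : ∀ S : Finset (Fin m), Integrable fun y => (∏ k ∈ S, u (y k)) * F y) :
    ∫ y, (∏ k, (1 + u (y k))) * F y = ∑ s ∈ range (m + 1),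
      (m.choose s : ℝ) * ∫ y, (∏ k ∈ {k : Fin m | k < s}, u (y k)) * F y := by
  simp_rw [prod_one_add, sum_mul]
  rw [integral_finsetSum _ fun S _ => hint S]
  have hcard (S : Finset (Fin m)) : ∫ y, (∏ k ∈ S, u (y k)) * F y =
      ∫ y, (∏ k ∈ {k : Fin m | k < #S}, u (y k)) * F y :=
    integral_prod_mul_eq_of_card_eq hF <| by
      rw [Fin.card_filter_val_lt, min_eq_right (card_le_univ S |>.trans_eq (Fintype.card_fin m))]
  rw [sum_congr rfl fun S _ => hcard S,
    sum_powerset_apply_card fun j => ∫ y, (∏ k ∈ {k : Fin m | k < j}, u (y k)) * F y,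
    card_univ, Fintype.card_fin]
  simp only [nsmul_eq_mul]

theorem integral_prod_lt_mul {s t : ℕ} {F : (Fin (s + t) → α) → ℝ}
    (hint : Integrable fun y => (∏ k ∈ {k : Fin (s + t) | k < s}, u (y k)) * F y) :
    ∫ y, (∏ k ∈ {k : Fin (s + t) | k < s}, u (y k)) * F y =
      ∫ y₁ : Fin s → α, (∏ k, u (y₁ k)) * ∫ y₂ : Fin t → α, F (Fin.append y₁ y₂) := by
  rw [integral_finAppend hint]
  congr with y₁
  rw [← integral_const_mul]
  congr with y₂
  congr 1
  rw [prod_filter, Fin.prod_univ_add]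
  simp only [Fin.val_castAdd, Fin.is_lt, if_true, Fin.append_left, Fin.val_natAdd,
    add_lt_iff_neg_left, Nat.not_lt_zero, if_false, prod_const_one, mul_one]

end FinProduct

theorem two_nsmul_sum_sum_ite_lt {ι M : Type*} [Fintype ι] [LinearOrder ι] [AddCommMonoid M]
    (x : ι → ι → M) (hx : ∀ i j, x i j = x j i) :
    2 • ∑ i, ∑ j, (if i < j then x i j else 0) = ∑ i, ∑ j, if i ≠ j then x i j else 0 := by
  have hsplit (i j : ι) : (if i ≠ j then x i j else 0) =
      (if i < j then x i j else 0) + if j < i then x j i else 0 := by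
    rcases lt_trichotomy i j with h | rfl | h
    · simp [h, h.ne, h.not_gt]
    · simp
    · simp [h, h.ne', h.not_gt, hx i j]
  simp only [hsplit, sum_add_distrib, two_nsmul]
  rw [sum_comm (f := fun i j => if j < i then x j i else 0)]

section ChargedConfigurations

variable {d : ℕ}

def chargesBoundedBy {ι : Type*} (A : ℝ) : Set (ι → ChargedPt d) := {z | ∀ i, |(z i).2| ≤ A}

theorem measurableSet_chargesBoundedBy (k : ℕ) (A : ℝ) :
    MeasurableSet (chargesBoundedBy A : Set (Fin k → ChargedPt d)) := by
  simpa only [chargesBoundedBy, Set.ofPred_forall] using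
    MeasurableSet.iInter fun i : Fin k => measurableSet_le
      (f := fun z : Fin k → ChargedPt d => |(z i).2|) (by fun_prop) measurable_const

theorem Fin.append_mem_chargesBoundedBy {A : ℝ} {n m : ℕ} {z : Fin n → ChargedPt d}
    {y : Fin m → ChargedPt d} (hz : z ∈ chargesBoundedBy A) (hy : y ∈ chargesBoundedBy A) :
    Fin.append z y ∈ chargesBoundedBy A :=
  fun i => Fin.addCases (fun j => by simpa using hz j) (fun j => by simpa using hy j) i

variable (w : (Fin d → ℝ) → (Fin d → ℝ) → ℝ)

theorem abs_pairInteraction_le {C A : ℝ} (hC : ∀ x y, |w x y| ≤ C) (hA : 0 ≤ A)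
    {p q : ChargedPt d} (hp : |p.2| ≤ A) (hq : |q.2| ≤ A) :
    |p.2 * q.2 * w p.1 q.1| ≤ C * A ^ 2 := by
  rw [abs_mul, abs_mul]
  exact (mul_le_mul (mul_le_mul hp hq (abs_nonneg _) hA) (hC _ _) (abs_nonneg _)
    (mul_nonneg hA hA)).trans_eq (by ring)

theorem interactionEnergy_eq_sum_sum {k : ℕ} (z : Fin k → ChargedPt d) :
    interactionEnergy w z =
      ∑ i, ∑ j, if i < j then (z i).2 * (z j).2 * w (z i).1 (z j).1 else 0 := by
  rw [interactionEnergy, sum_filter, Fintype.sum_prod_type]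

theorem interactionEnergy_comp_perm (hw_symm : ∀ x y, w x y = w y x) {k : ℕ}
    (z : Fin k → ChargedPt d) (e : Equiv.Perm (Fin k)) :
    interactionEnergy w (z ∘ e) = interactionEnergy w z := by
  have hx (z : Fin k → ChargedPt d) (i j : Fin k) :
      (z i).2 * (z j).2 * w (z i).1 (z j).1 = (z j).2 * (z i).2 * w (z j).1 (z i).1 := by
    rw [hw_symm]; ring
  have h2 : 2 • interactionEnergy w (z ∘ e) = 2 • interactionEnergy w z := by
    simp only [interactionEnergy_eq_sum_sum, two_nsmul_sum_sum_ite_lt _ (hx _)]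
    exact Fintype.sum_equiv e _ _ fun i => Fintype.sum_equiv e _ _ fun j => by
      simp [e.injective.ne_iff]
  exact nsmul_right_injective two_ne_zero h2

theorem interactionEnergy_append_comp_perm (hw_symm : ∀ x y, w x y = w y x) {n m : ℕ}
    (T : Fin n → ChargedPt d) (y : Fin m → ChargedPt d) (e : Equiv.Perm (Fin m)) :
    interactionEnergy w (Fin.append T (y ∘ e)) = interactionEnergy w (Fin.append T y) := by
  have happend : Fin.append T (y ∘ e) =
      Fin.append T y ∘ finSumFinEquiv.permCongr (Equiv.sumCongr (Equiv.refl _) e) := by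
    funext i
    refine Fin.addCases (fun j => ?_) (fun j => ?_) i <;> simp [Equiv.permCongr_apply]
  rw [happend, interactionEnergy_comp_perm w hw_symm]

theorem interactionEnergy_comp_cast {k k' : ℕ} (h : k = k') (z : Fin k' → ChargedPt d) :
    interactionEnergy w (z ∘ Fin.cast h) = interactionEnergy w z := by
  subst h
  rfl

theorem interactionEnergy_cons {k : ℕ} (a : ChargedPt d) (z : Fin k → ChargedPt d) :
    interactionEnergy w (Fin.cons a z) =
      ∑ j, a.2 * (z j).2 * w a.1 (z j).1 + interactionEnergy w z := by
  simp only [interactionEnergy_eq_sum_sum, Fin.sum_univ_succ, Fin.cons_zero, Fin.cons_succ,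
    if_false, Fin.succ_pos, if_true, Fin.succ_lt_succ_iff, Fin.not_lt_zero, zero_add]

theorem interactionEnergy_append_cons {n m : ℕ} (a : ChargedPt d) (T : Fin n → ChargedPt d)
    (y : Fin m → ChargedPt d) :
    interactionEnergy w (Fin.append (Fin.cons a T) y) =
      ∑ j, a.2 * (T j).2 * w a.1 (T j).1 + ∑ k, a.2 * (y k).2 * w a.1 (y k).1 +
        interactionEnergy w (Fin.append T y) := by
  rw [Fin.append_cons, interactionEnergy_comp_cast, interactionEnergy_cons, Fin.sum_univ_add]
  simp only [Fin.append_left, Fin.append_right]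

theorem continuous_interactionEnergy
    (hw_cont : Continuous fun p : (Fin d → ℝ) × (Fin d → ℝ) => w p.1 p.2) {k : ℕ} :
    Continuous fun z : Fin k → ChargedPt d => interactionEnergy w z := by
  refine continuous_finsetSum _ fun p _ => ?_
  have hw : Continuous fun z : Fin k → ChargedPt d => w (z p.1).1 (z p.2).1 :=
    hw_cont.comp (((continuous_apply p.1).fst).prodMk ((continuous_apply p.2).fst))
  fun_prop

theorem abs_interactionEnergy_le {C A : ℝ} (hC : ∀ x y, |w x y| ≤ C) (hA : 0 ≤ A) {k : ℕ}
    {z : Fin k → ChargedPt d} (hz : z ∈ chargesBoundedBy A) :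
    |interactionEnergy w z| ≤ C * A ^ 2 * k ^ 2 := by
  have hC0 : 0 ≤ C := (abs_nonneg _).trans (hC 0 0)
  have hcard : (#{p : Fin k × Fin k | p.1 < p.2} : ℝ) ≤ k ^ 2 := by
    exact_mod_cast (card_filter_le _ _).trans_eq (by simp [sq])
  calc |interactionEnergy w z| ≤ ∑ p ∈ {p : Fin k × Fin k | p.1 < p.2}, C * A ^ 2 :=
        (abs_sum_le_sum_abs _ _).trans
          (sum_le_sum fun p _ => abs_pairInteraction_le w hC hA (hz p.1) (hz p.2))
    _ ≤ C * A ^ 2 * k ^ 2 := by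
      rw [sum_const, nsmul_eq_mul, mul_comm]
      exact mul_le_mul_of_nonneg_left hcard (by positivity)

end ChargedConfigurations

section KirkwoodSalsburg

variable {d : ℕ} {w : (Fin d → ℝ) → (Fin d → ℝ) → ℝ} {g : (Fin d → ℝ) → ℝ} {f : ℝ → ℝ}
  {A C : ℝ}

theorem configWeight_append {s t : ℕ} (u : Fin s → ChargedPt d) (v : Fin t → ChargedPt d) :
    configWeight g f (Fin.append u v) = configWeight g f u * configWeight g f v := by
  simp only [configWeight, Fin.prod_univ_add, Fin.append_left, Fin.append_right]

theorem configWeight_comp_perm {m : ℕ} (y : Fin m → ChargedPt d) (e : Equiv.Perm (Fin m)) :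
    configWeight g f (y ∘ e) = configWeight g f y :=
  Equiv.prod_comp e fun j => g (y j).1 * f (y j).2

theorem integrable_configWeight_s10 (hg_int : Integrable g) (hf_int : Integrable f) {m : ℕ} :
    Integrable (configWeight g f : (Fin m → ChargedPt d) → ℝ) :=
  Integrable.fintype_prod (f := fun _ (p : ChargedPt d) => g p.1 * f p.2) fun _ => by
    rw [Measure.volume_eq_prod]
    exact hg_int.mul_prod hf_int

theorem support_configWeight_subset (hf_supp : Function.support f ⊆ Set.Icc (-A) A) {m : ℕ} :
    Function.support (configWeight g f : (Fin m → ChargedPt d) → ℝ) ⊆ chargesBoundedBy A := by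
  intro y hy k
  have hfk : f (y k).2 ≠ 0 := right_ne_zero_of_mul (prod_ne_zero_iff.mp hy k (mem_univ k))
  exact abs_le.mpr (hf_supp hfk)

theorem integrable_configWeight_mul (hg_int : Integrable g) (hf_int : Integrable f)
    (hf_supp : Function.support f ⊆ Set.Icc (-A) A) {m : ℕ}
    {φ : (Fin m → ChargedPt d) → ℝ} (hφ : φ ∈ boundedContinuousOn (chargesBoundedBy A)) :
    Integrable fun y => configWeight g f y * φ y :=
  (integrable_configWeight_s10 hg_int hf_int).mul_of_mem_boundedContinuousOn
    (measurableSet_chargesBoundedBy m A) (support_configWeight_subset hf_supp) hφ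

theorem abs_exp_neg_interactionEnergy_le (hC : ∀ x y, |w x y| ≤ C) (hA : 0 ≤ A) {k : ℕ}
    {z : Fin k → ChargedPt d} (hz : z ∈ chargesBoundedBy A) :
    |exp (-interactionEnergy w z)| ≤ exp (C * A ^ 2 * k ^ 2) := by
  rw [abs_exp, exp_le_exp]
  exact (neg_le_abs _).trans (abs_interactionEnergy_le w hC hA hz)

theorem exp_neg_interactionEnergy_append_mem
    (hw_cont : Continuous fun p : (Fin d → ℝ) × (Fin d → ℝ) => w p.1 p.2)
    (hC : ∀ x y, |w x y| ≤ C) (hA : 0 ≤ A) {n m : ℕ} {T : Fin n → ChargedPt d}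
    (hT : T ∈ chargesBoundedBy A) :
    (fun y : Fin m → ChargedPt d => exp (-interactionEnergy w (Fin.append T y))) ∈
      boundedContinuousOn (chargesBoundedBy A) :=
  ⟨by have := continuous_interactionEnergy w hw_cont (k := n + m); fun_prop,
    _, fun _ hy => abs_exp_neg_interactionEnergy_le hC hA (Fin.append_mem_chargesBoundedBy hT hy)⟩

theorem nuCoeff_mem (hw_cont : Continuous fun p : (Fin d → ℝ) × (Fin d → ℝ) => w p.1 p.2)
    (hC : ∀ x y, |w x y| ≤ C) (hA : 0 ≤ A) (hg_int : Integrable g) (hf_int : Integrable f)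
    (hf_supp : Function.support f ⊆ Set.Icc (-A) A) (N q : ℕ) :
    nuCoeff w g f N q ∈ boundedContinuousOn (chargesBoundedBy A) := by
  refine Subalgebra.smul_mem _ (integral_mul_mem_boundedContinuousOn
    (integrable_configWeight_s10 hg_int hf_int) (support_configWeight_subset hf_supp)
    (by have := continuous_interactionEnergy w hw_cont (k := N + q); fun_prop)
    fun Z hZ y hy => abs_exp_neg_interactionEnergy_le hC hA
      (Fin.append_mem_chargesBoundedBy hZ hy)) ((q.factorial : ℝ)⁻¹)

variable (w) in
noncomputable def mayerFunction (a p : ChargedPt d) : ℝ :=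
  exp (-(a.2 * p.2 * w a.1 p.1)) - 1

theorem prod_mayerFunction_mem
    (hw_cont : Continuous fun p : (Fin d → ℝ) × (Fin d → ℝ) => w p.1 p.2)
    (hC : ∀ x y, |w x y| ≤ C) (hA : 0 ≤ A) {a : ChargedPt d} (ha : |a.2| ≤ A) {ι : Type*}
    (S : Finset ι) :
    (fun y : ι → ChargedPt d => ∏ k ∈ S, mayerFunction w a (y k)) ∈
      boundedContinuousOn (chargesBoundedBy A) := by
  have hmem (k : ι) : (fun y : ι → ChargedPt d => mayerFunction w a (y k)) ∈
      boundedContinuousOn (chargesBoundedBy A) := by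
    have hw : Continuous fun y : ι → ChargedPt d => w a.1 (y k).1 :=
      hw_cont.comp (continuous_const.prodMk (continuous_apply k).fst)
    refine ⟨by unfold mayerFunction; fun_prop, exp (C * A ^ 2) + 1, fun y hy => ?_⟩
    have hpair : -(a.2 * (y k).2 * w a.1 (y k).1) ≤ C * A ^ 2 :=
      (neg_le_abs _).trans (abs_pairInteraction_le w hC hA ha (hy k))
    refine (abs_sub _ _).trans ?_
    rw [abs_one, abs_exp]
    gcongr
  simpa only [Finset.prod_fn] using Subalgebra.prod_mem _ fun k _ => hmem k

variable (w g f) in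
/-- The `s`-th term of the Kirkwood–Salsburg operator at `x̃₁ = a` and `(x̃₂, …, x̃ₙ) = T`. -/
noncomputable def kirkwoodSalsburgTerm (a : ChargedPt d) {n : ℕ} (T : Fin n → ChargedPt d)
    (s : ℕ) (φ : (Fin (n + s) → ChargedPt d) → ℝ) : ℝ :=
  exp (-∑ j, a.2 * (T j).2 * w a.1 (T j).1) * ((s.factorial : ℝ)⁻¹ *
    ∫ y : Fin s → ChargedPt d,
      (∏ k, g (y k).1 * f (y k).2 * mayerFunction w a (y k)) * φ (Fin.append T y))

theorem integrable_kirkwoodSalsburg_integrand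
    (hw_cont : Continuous fun p : (Fin d → ℝ) × (Fin d → ℝ) => w p.1 p.2)
    (hC : ∀ x y, |w x y| ≤ C) (hA : 0 ≤ A) (hg_int : Integrable g) (hf_int : Integrable f)
    (hf_supp : Function.support f ⊆ Set.Icc (-A) A) {a : ChargedPt d} (ha : |a.2| ≤ A)
    {n s : ℕ} {T : Fin n → ChargedPt d} (hT : T ∈ chargesBoundedBy A)
    {φ : (Fin (n + s) → ChargedPt d) → ℝ} (hφ : φ ∈ boundedContinuousOn (chargesBoundedBy A)) :
    Integrable fun y : Fin s → ChargedPt d =>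
      (∏ k, g (y k).1 * f (y k).2 * mayerFunction w a (y k)) * φ (Fin.append T y) := by
  have hφT := comp_mem_boundedContinuousOn hφ (h := Fin.append T) (by fun_prop)
    fun _ hy => Fin.append_mem_chargesBoundedBy hT hy
  refine (integrable_configWeight_mul hg_int hf_int hf_supp <| Subalgebra.mul_mem _
    (prod_mayerFunction_mem hw_cont hC hA ha univ) hφT).congr (.of_forall fun y => ?_)
  simp only [configWeight, Pi.mul_apply, Function.comp_apply, prod_mul_distrib]
  ring

theorem IsDeconvolution.map_kirkwoodSalsburgTerm
    (hw_cont : Continuous fun p : (Fin d → ℝ) × (Fin d → ℝ) => w p.1 p.2)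
    (hC : ∀ x y, |w x y| ≤ C) (hA : 0 ≤ A) (hg_int : Integrable g) (hf_int : Integrable f)
    (hf_supp : Function.support f ⊆ Set.Icc (-A) A) {a : ChargedPt d} (ha : |a.2| ≤ A)
    {n s : ℕ} {T : Fin n → ChargedPt d} (hT : T ∈ chargesBoundedBy A) {σ : ℕ → ℝ}
    {ν ρ : ℕ → (Fin (n + s) → ChargedPt d) → ℝ} (h : IsDeconvolution σ ν ρ)
    (hν : ∀ q, ν q ∈ boundedContinuousOn (chargesBoundedBy A)) :
    IsDeconvolution σ (fun q => kirkwoodSalsburgTerm w g f a T s (ν q))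
      (fun q => kirkwoodSalsburgTerm w g f a T s (ρ q)) := by
  let L : (boundedContinuousOn (chargesBoundedBy A)).toSubmodule →ₗ[ℝ] ℝ :=
    { toFun := fun φ => kirkwoodSalsburgTerm w g f a T s φ.1
      map_add' := fun φ ψ => by
        simp only [kirkwoodSalsburgTerm, Submodule.coe_add, Pi.add_apply, mul_add]
        rw [integral_add (integrable_kirkwoodSalsburg_integrand hw_cont hC hA hg_int hf_int
          hf_supp ha hT φ.2) (integrable_kirkwoodSalsburg_integrand hw_cont hC hA hg_int
          hf_int hf_supp ha hT ψ.2)]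
        ring
      map_smul' := fun c φ => by
        simp only [kirkwoodSalsburgTerm, SetLike.val_smul, Pi.smul_apply, smul_eq_mul,
          RingHom.id_apply, mul_left_comm _ c, integral_const_mul] }
  exact h.map (S := (boundedContinuousOn (chargesBoundedBy A)).toSubmodule) L hν

theorem integrable_prod_mayerFunction_mul
    (hw_cont : Continuous fun p : (Fin d → ℝ) × (Fin d → ℝ) => w p.1 p.2)
    (hC : ∀ x y, |w x y| ≤ C) (hA : 0 ≤ A) (hg_int : Integrable g) (hf_int : Integrable f)
    (hf_supp : Function.support f ⊆ Set.Icc (-A) A) {a : ChargedPt d} (ha : |a.2| ≤ A)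
    {n m : ℕ} {T : Fin n → ChargedPt d} (hT : T ∈ chargesBoundedBy A) (S : Finset (Fin m)) :
    Integrable fun y => (∏ k ∈ S, mayerFunction w a (y k)) *
      (configWeight g f y * exp (-interactionEnergy w (Fin.append T y))) := by
  refine (integrable_configWeight_mul hg_int hf_int hf_supp <| Subalgebra.mul_mem _
    (prod_mayerFunction_mem hw_cont hC hA ha S)
    (exp_neg_interactionEnergy_append_mem hw_cont hC hA hT)).congr (.of_forall fun y => ?_)
  simp only [Pi.mul_apply]
  ring

theorem integral_prod_mayerFunction_mul_eq_nuCoeff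
    (hw_cont : Continuous fun p : (Fin d → ℝ) × (Fin d → ℝ) => w p.1 p.2)
    (hC : ∀ x y, |w x y| ≤ C) (hA : 0 ≤ A) (hg_int : Integrable g) (hf_int : Integrable f)
    (hf_supp : Function.support f ⊆ Set.Icc (-A) A) {a : ChargedPt d} (ha : |a.2| ≤ A)
    {n s t : ℕ} {T : Fin n → ChargedPt d} (hT : T ∈ chargesBoundedBy A) :
    ∫ y : Fin (s + t) → ChargedPt d,
      (∏ k ∈ {k : Fin (s + t) | k < s}, mayerFunction w a (y k)) *
        (configWeight g f y * exp (-interactionEnergy w (Fin.append T y))) =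
    t.factorial * ∫ y : Fin s → ChargedPt d,
      (∏ k, g (y k).1 * f (y k).2 * mayerFunction w a (y k)) *
        nuCoeff w g f (n + s) t (Fin.append T y) := by
  rw [integral_prod_lt_mul (integrable_prod_mayerFunction_mul hw_cont hC hA hg_int hf_int
    hf_supp ha hT _), ← integral_const_mul]
  congr with y₁
  have hsplit (y₂ : Fin t → ChargedPt d) :
      configWeight g f (Fin.append y₁ y₂) *
          exp (-interactionEnergy w (Fin.append T (Fin.append y₁ y₂))) =
        configWeight g f y₁ * (configWeight g f y₂ *
          exp (-interactionEnergy w (Fin.append (Fin.append T y₁) y₂))) := by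
    rw [configWeight_append, Fin.append_assoc, interactionEnergy_comp_cast, mul_assoc]
  have ht : (t.factorial : ℝ) ≠ 0 := Nat.cast_ne_zero.mpr t.factorial_ne_zero
  simp_rw [hsplit, integral_const_mul, nuCoeff, configWeight, prod_mul_distrib]
  field_simp

theorem nuCoeff_cons (hw_cont : Continuous fun p : (Fin d → ℝ) × (Fin d → ℝ) => w p.1 p.2)
    (hw_symm : ∀ x y, w x y = w y x) (hC : ∀ x y, |w x y| ≤ C) (hA : 0 ≤ A)
    (hg_int : Integrable g) (hf_int : Integrable f)
    (hf_supp : Function.support f ⊆ Set.Icc (-A) A) {a : ChargedPt d} (ha : |a.2| ≤ A) {n m : ℕ}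
    {T : Fin n → ChargedPt d}
    (hT : T ∈ chargesBoundedBy A) :
    nuCoeff w g f (n + 1) m (Fin.cons a T) =
      ∑ s ∈ range (m + 1), kirkwoodSalsburgTerm w g f a T s (nuCoeff w g f (n + s) (m - s)) := by
  set E := ∑ j, a.2 * (T j).2 * w a.1 (T j).1
  set F : (Fin m → ChargedPt d) → ℝ :=
    fun y => configWeight g f y * exp (-interactionEnergy w (Fin.append T y))
  have hexpand (y : Fin m → ChargedPt d) :
      configWeight g f y * exp (-interactionEnergy w (Fin.append (Fin.cons a T) y)) =
        exp (-E) * ((∏ k, (1 + mayerFunction w a (y k))) * F y) := by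
    simp only [F, mayerFunction, add_sub_cancel, ← exp_sum, sum_neg_distrib]
    rw [interactionEnergy_append_cons, neg_add, neg_add, exp_add, exp_add]
    ring
  have hF (e : Equiv.Perm (Fin m)) (y : Fin m → ChargedPt d) : F (y ∘ e) = F y := by
    simp only [F, configWeight_comp_perm, interactionEnergy_append_comp_perm w hw_symm]
  have hterm (s : ℕ) (hs : s ∈ range (m + 1)) :
      (m.factorial : ℝ)⁻¹ * (m.choose s *
        ∫ y, (∏ k ∈ {k : Fin m | k < s}, mayerFunction w a (y k)) * F y) =
      (s.factorial : ℝ)⁻¹ * ∫ y : Fin s → ChargedPt d,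
        (∏ k, g (y k).1 * f (y k).2 * mayerFunction w a (y k)) *
          nuCoeff w g f (n + s) (m - s) (Fin.append T y) := by
    obtain ⟨t, rfl⟩ := Nat.exists_eq_add_of_le (mem_range_succ_iff.mp hs)
    rw [← Nat.choose_mul_factorial_mul_factorial (Nat.le_add_right s t), Nat.add_sub_cancel_left,
      integral_prod_mayerFunction_mul_eq_nuCoeff hw_cont hC hA hg_int hf_int hf_supp ha hT]
    have := s.factorial_ne_zero
    have := t.factorial_ne_zero
    have := (Nat.choose_pos (Nat.le_add_right s t)).ne'
    push_cast
    field_simp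
  rw [nuCoeff]
  simp_rw [hexpand, integral_const_mul]
  rw [integral_prod_one_add_mul hF (integrable_prod_mayerFunction_mul hw_cont hC hA hg_int
    hf_int hf_supp ha hT), mul_left_comm, mul_sum, mul_sum]
  exact sum_congr rfl fun s hs => by rw [hterm s hs]; rfl

end KirkwoodSalsburg

theorem kirkwood_salsburg_perturbative_general
    (d : ℕ)
    (w : (Fin d → ℝ) → (Fin d → ℝ) → ℝ)
    (hw_cont : Continuous fun p : (Fin d → ℝ) × (Fin d → ℝ) => w p.1 p.2)
    (hw_bdd : ∃ C : ℝ, ∀ x y : Fin d → ℝ, |w x y| ≤ C)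
    (hw_symm : ∀ x y : Fin d → ℝ, w x y = w y x)
    (A : ℝ)
    (g : (Fin d → ℝ) → ℝ) (hg_int : Integrable g)
    (f : ℝ → ℝ) (hf_int : Integrable f)
    (hf_supp : Function.support f ⊆ Set.Icc (-A) A)
    (ρ : (n : ℕ) → ℕ → (Fin n → ChargedPt d) → ℝ)
    (hρ : ∀ (n ℓ : ℕ) (z : Fin n → ChargedPt d),
      ρ n ℓ z = nuCoeff w g f n ℓ z -
        ∑ j ∈ Finset.Icc 1 ℓ, sigmaCoeff w g f j * ρ n (ℓ - j) z) :
    ∀ (n' ℓ : ℕ) (z : Fin (n' + 1) → ChargedPt d), (∀ i, |(z i).2| ≤ A) →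
      ρ (n' + 1) ℓ z =
        Real.exp (-(∑ j : Fin n',
            (z 0).2 * (Fin.tail z j).2 * w (z 0).1 (Fin.tail z j).1)) *
          ∑ s ∈ Finset.range (ℓ + 1), ((s.factorial : ℝ))⁻¹ *
            ∫ y : Fin s → ChargedPt d,
              (∏ k, g (y k).1 * f (y k).2 *
                (Real.exp (-((z 0).2 * (y k).2 * w (z 0).1 (y k).1)) - 1)) *
              ρ (n' + s) (ℓ - s) (Fin.append (Fin.tail z) y) := by
  intro n' ℓ z hz
  obtain ⟨C, hC⟩ := hw_bdd
  have hA : 0 ≤ A := (abs_nonneg _).trans (hz 0)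
  obtain ⟨a, T, rfl⟩ : ∃ a T, z = Fin.cons a T := ⟨z 0, Fin.tail z, (Fin.cons_self_tail z).symm⟩
  have ha : |a.2| ≤ A := hz 0
  have hT : T ∈ chargesBoundedBy A := fun i => hz i.succ
  have hdeconv (N : ℕ) : IsDeconvolution (sigmaCoeff w g f) (nuCoeff w g f N) (ρ N) :=
    fun q => funext fun Z => by simpa using hρ N q Z
  have hρz : IsDeconvolution (sigmaCoeff w g f)
      (fun ℓ => ∑ s ∈ range (ℓ + 1),
        kirkwoodSalsburgTerm w g f a T s (nuCoeff w g f (n' + s) (ℓ - s)))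
      (fun ℓ => ρ (n' + 1) ℓ (Fin.cons a T)) := fun ℓ => by
    dsimp only
    rw [← nuCoeff_cons hw_cont hw_symm hC hA hg_int hf_int hf_supp ha hT]
    exact hρ _ ℓ _
  have hKS := IsDeconvolution.sum_range fun s => (hdeconv (n' + s)).map_kirkwoodSalsburgTerm
    hw_cont hC hA hg_int hf_int hf_supp ha hT (nuCoeff_mem hw_cont hC hA hg_int hf_int hf_supp _)
  rw [congrFun (hρz.unique hKS) ℓ, mul_sum]
  rfl

/-- (Perturbative Kirkwood–Salsburg recursion.) Let `ρ_{n,ℓ}` be the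
perturbative correlation functions, defined recursively in `ℓ` by
`ρ_{n,ℓ} = ν_{n,ℓ} − ∑_{j=1}^{ℓ} σ_j ρ_{n,ℓ−j}` (with `ρ_{0,ℓ} = δ_{ℓ,0}`). Then for all
external charged points with charges bounded by `A`, the order-by-order Kirkwood–Salsburg
equation holds. -/
theorem kirkwood_salsburg_perturbative
    (d : ℕ) (hd : 1 ≤ d)
    (w : (Fin d → ℝ) → (Fin d → ℝ) → ℝ)
    (hw_cont : Continuous fun p : (Fin d → ℝ) × (Fin d → ℝ) => w p.1 p.2)
    (hw_bdd : ∃ C : ℝ, ∀ x y : Fin d → ℝ, |w x y| ≤ C)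
    (hw_symm : ∀ x y : Fin d → ℝ, w x y = w y x)
    (hw_transl : ∀ x y z : Fin d → ℝ, w (x + z) (y + z) = w x y)
    (hw_psd : ∀ (k : ℕ) (z : Fin k → (Fin d → ℝ)) (c : Fin k → ℝ),
      0 ≤ ∑ i : Fin k, ∑ j : Fin k, c i * c j * w (z i) (z j))
    (A : ℝ) (hA : 0 < A)
    (g : (Fin d → ℝ) → ℝ) (hg_int : Integrable g) (hg_nonneg : ∀ x, 0 ≤ g x)
    (f : ℝ → ℝ) (hf_int : Integrable f) (hf_nonneg : ∀ b, 0 ≤ f b)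
    (hf_supp : Function.support f ⊆ Set.Icc (-A) A)
    (ρ : (n : ℕ) → ℕ → (Fin n → ChargedPt d) → ℝ)
    (hρ : ∀ (n ℓ : ℕ) (z : Fin n → ChargedPt d),
      ρ n ℓ z = nuCoeff w g f n ℓ z -
        ∑ j ∈ Finset.Icc 1 ℓ, sigmaCoeff w g f j * ρ n (ℓ - j) z)
    (hρ0 : ∀ (ℓ : ℕ) (z : Fin 0 → ChargedPt d),
      ρ 0 ℓ z = if ℓ = 0 then 1 else 0) :
    ∀ (n' ℓ : ℕ) (z : Fin (n' + 1) → ChargedPt d), (∀ i, |(z i).2| ≤ A) →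
      ρ (n' + 1) ℓ z =
        Real.exp (-(∑ j : Fin n',
            (z 0).2 * (Fin.tail z j).2 * w (z 0).1 (Fin.tail z j).1)) *
          ∑ s ∈ Finset.range (ℓ + 1), ((s.factorial : ℝ))⁻¹ *
            ∫ y : Fin s → ChargedPt d,
              (∏ k, g (y k).1 * f (y k).2 *
                (Real.exp (-((z 0).2 * (y k).2 * w (z 0).1 (y k).1)) - 1)) *
              ρ (n' + s) (ℓ - s) (Fin.append (Fin.tail z) y) :=
  kirkwood_salsburg_perturbative_general d w hw_cont hw_bdd hw_symm A g hg_int f hf_int hf_supp ρ hρ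
end

section
/- Let X be a set and let w_s : X × X → ℝ be a symmetric kernel which is pointwise positive semidefinite. Let n ≥ 1, let x_1,…,x_n ∈ X and a_1,…,a_n ∈ ℝ, and let B ∈ ℝ satisfy a_i^2 · w_s(x_i,x_i) / 2 ≤ B for every i. Then there exists an index i ∈ {1,…,n} such that ∑_{j ≠ i} a_i a_j w_s(x_i,x_j) ≥ −2B; equivalently, exp(−∑_{j≠i} a_i a_j w_s(x_i,x_j)) ≤ e^{2B}. -/
open Finset Real

/-! Summing the off-diagonal row sums `∑_{j ≠ i} a_i a_j w(x_i, x_j)` over `i` gives the full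
quadratic form minus its diagonal, hence at least `-2nB` by positive semidefiniteness; so some
row sum is at least the average bound `-2B`. -/

theorem sum_sum_erase_eq_sub_sum_diag {ι R : Type*} [Fintype ι] [DecidableEq ι]
    [AddCommGroup R] (M : ι → ι → R) :
    ∑ i, ∑ j ∈ univ.erase i, M i j = ∑ i, ∑ j, M i j - ∑ i, M i i := by
  rw [← sum_sub_distrib]
  exact sum_congr rfl fun i _ => sum_erase_eq_sub (mem_univ i)

theorem exists_sum_erase_ge_of_sum_nonneg {ι : Type*} [Fintype ι] [Nonempty ι] [DecidableEq ι]
    (M : ι → ι → ℝ) (hM : 0 ≤ ∑ i, ∑ j, M i j) (b : ℝ) (hdiag : ∀ i, M i i ≤ b) :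
    ∃ i, -b ≤ ∑ j ∈ univ.erase i, M i j := by
  have hsum : ∑ _i : ι, -b ≤ ∑ i, ∑ j ∈ univ.erase i, M i j := by
    rw [sum_sum_erase_eq_sub_sum_diag, sum_neg_distrib]
    linarith [sum_le_sum fun i (_ : i ∈ univ) => hdiag i]
  obtain ⟨i, -, hi⟩ := exists_le_of_sum_le univ_nonempty hsum
  exact ⟨i, hi⟩

theorem exists_good_first_vertex_general
    {X : Type*} (w : X → X → ℝ)
    (hw_psd : ∀ (k : ℕ) (z : Fin k → X) (c : Fin k → ℝ),
      0 ≤ ∑ i : Fin k, ∑ j : Fin k, c i * c j * w (z i) (z j))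
    (n : ℕ) (hn : 1 ≤ n) (x : Fin n → X) (a : Fin n → ℝ) (B : ℝ)
    (hB : ∀ i : Fin n, (a i) ^ 2 * w (x i) (x i) / 2 ≤ B) :
    ∃ i : Fin n,
      -(2 * B) ≤ (∑ j ∈ Finset.univ.erase i, a i * a j * w (x i) (x j)) ∧
      Real.exp (-(∑ j ∈ Finset.univ.erase i, a i * a j * w (x i) (x j)))
        ≤ Real.exp (2 * B) := by
  have : Nonempty (Fin n) := ⟨⟨0, hn⟩⟩
  have hdiag (i : Fin n) : a i * a i * w (x i) (x i) ≤ 2 * B := by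
    linarith [hB i]
  obtain ⟨i, hi⟩ := exists_sum_erase_ge_of_sum_nonneg (fun i j => a i * a j * w (x i) (x j))
    (hw_psd n x a) (2 * B) hdiag
  exact ⟨i, hi, exp_le_exp.mpr (by linarith)⟩

/-- (Conditioning/permutation argument of the Penrose–Ruelle estimate.)
For a symmetric, pointwise positive semidefinite kernel `w` on a set `X`, points `x₁,…,xₙ`,
charges `a₁,…,aₙ` and `B` with `aᵢ² w(xᵢ,xᵢ)/2 ≤ B` for all `i`, there is an index `i` whose
interaction energy with the other points satisfies
`∑_{j≠i} aᵢ aⱼ w(xᵢ,xⱼ) ≥ −2B`, i.e. `exp(−∑_{j≠i} aᵢ aⱼ w(xᵢ,xⱼ)) ≤ e^{2B}`. -/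
theorem exists_good_first_vertex
    {X : Type*} (w : X → X → ℝ)
    (hw_symm : ∀ x y : X, w x y = w y x)
    (hw_psd : ∀ (k : ℕ) (z : Fin k → X) (c : Fin k → ℝ),
      0 ≤ ∑ i : Fin k, ∑ j : Fin k, c i * c j * w (z i) (z j))
    (n : ℕ) (hn : 1 ≤ n) (x : Fin n → X) (a : Fin n → ℝ) (B : ℝ)
    (hB : ∀ i : Fin n, (a i) ^ 2 * w (x i) (x i) / 2 ≤ B) :
    ∃ i : Fin n,
      -(2 * B) ≤ (∑ j ∈ Finset.univ.erase i, a i * a j * w (x i) (x j)) ∧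
      Real.exp (-(∑ j ∈ Finset.univ.erase i, a i * a j * w (x i) (x j)))
        ≤ Real.exp (2 * B) :=
  exists_good_first_vertex_general w hw_psd n hn x a B hB
end

section
/- Let B ≥ 0 and E ≥ 0 be real numbers. Define K : ℕ × ℕ → ℝ by K(0,0) := 1, K(0,ℓ) := 0 for ℓ ≥ 1, and, for n ≥ 1, K(n,ℓ) := e^{2B(n+ℓ−1)} · n · (n+ℓ)^{ℓ−1} · E^ℓ / ℓ! (where for ℓ = 0 the factor (n+ℓ)^{ℓ−1} means 1/n, so K(n,0) = e^{2B(n−1)}). Then K(1,0) = 1, and for all n ≥ 1 and m ≥ 0 with n + m ≥ 2, K satisfies the Kirkwood–Salsburg recursion K(n,m) = e^{2B} · ∑_{s=0}^{m} (E^s / s!) · K(n−1+s, m−s). -/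
/-! Writing `n = ν + 1`, each summand factorizes as
`E^s/s! · K(ν+s, m−s) = e^{2B(ν+m−1)} (E^m/m!) · C(m,s) (ν+s) (ν+m)^{m−s−1}`,
so the recursion reduces to Abel's identity
`∑ C(m,s) (ν+s) (ν+m)^{m−s−1} = (ν+1) (ν+m+1)^{m−1}`. That identity is the case `x = ν + m` of
`∑ C(m,s) (ν+s) x^{m−s} = ν (x+1)^m + m (x+1)^{m−1}`, the binomial theorem plus its derivative,
because `ν (ν+m+1) + m = (ν+1)(ν+m)`. -/

open Finset

section Binomial

variable {R : Type*} [CommRing R]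

theorem sum_range_choose_mul_pow (x : R) (m : ℕ) :
    ∑ s ∈ range (m + 1), (m.choose s : R) * x ^ (m - s) = (x + 1) ^ m := by
  rw [add_comm x, add_pow]
  exact sum_congr rfl fun s _ => by ring

theorem sum_range_mul_choose_mul_pow (x : R) (m : ℕ) :
    ∑ s ∈ range (m + 1), (s : R) * m.choose s * x ^ (m - s) = m * (x + 1) ^ (m - 1) := by
  cases m with
  | zero => simp
  | succ k =>
    have hterm (i : ℕ) : ((i + 1 : ℕ) : R) * (k + 1).choose (i + 1) * x ^ (k + 1 - (i + 1))
        = (k + 1) * (k.choose i * x ^ (k - i)) := by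
      have h := congrArg (Nat.cast (R := R)) (Nat.add_one_mul_choose_eq k i)
      push_cast at h
      rw [Nat.add_sub_add_right]
      push_cast
      linear_combination (-x ^ (k - i)) * h
    rw [sum_range_succ', sum_congr rfl fun i _ => hterm i, ← mul_sum, sum_range_choose_mul_pow]
    simp

theorem sum_range_choose_mul_add_mul_pow (ν x : R) (m : ℕ) :
    ∑ s ∈ range (m + 1), (m.choose s : R) * (ν + s) * x ^ (m - s)
      = ν * (x + 1) ^ m + m * (x + 1) ^ (m - 1) := by
  rw [← sum_range_choose_mul_pow, ← sum_range_mul_choose_mul_pow, mul_sum, ← sum_add_distrib]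
  exact sum_congr rfl fun s _ => by ring

end Binomial

theorem sum_range_choose_mul_add_mul_zpow_abel {K : Type*} [Field K] (ν : K) (m : ℕ)
    (h₀ : ν + m ≠ 0) (h₁ : ν + m + 1 ≠ 0) :
    ∑ s ∈ range (m + 1), (m.choose s : K) * (ν + s) * (ν + m) ^ (((m - s : ℕ) : ℤ) - 1)
      = (ν + 1) * (ν + m + 1) ^ ((m : ℤ) - 1) := by
  simp only [zpow_sub₀ h₀, zpow_natCast, zpow_one, mul_div_assoc', ← sum_div,
    sum_range_choose_mul_add_mul_pow]
  cases m with
  | zero => simp at h₀ h₁ ⊢; field_simp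
  | succ k =>
    push_cast at h₀ h₁ ⊢
    rw [add_sub_cancel_right, zpow_natCast]
    field_simp
    ring

noncomputable def ksMajorant (B E : ℝ) (n ℓ : ℕ) : ℝ :=
  Real.exp (2 * B * (n + ℓ - 1)) * n * ((n + ℓ : ℝ)) ^ ((ℓ : ℤ) - 1) * E ^ ℓ / ℓ.factorial

theorem ksMajorant_zero_left (B E : ℝ) (ℓ : ℕ) : ksMajorant B E 0 ℓ = 0 := by
  simp [ksMajorant]

theorem ksMajorant_succ_left (B E : ℝ) (ν m : ℕ) :
    ksMajorant B E (ν + 1) m = Real.exp (2 * B) * (Real.exp (2 * B * (ν + m - 1)) *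
      (E ^ m / m.factorial) * ((ν + 1) * (ν + m + 1 : ℝ) ^ ((m : ℤ) - 1))) := by
  have hexp : Real.exp (2 * B) * Real.exp (2 * B * (ν + m - 1))
      = Real.exp (2 * B * ((ν + 1 : ℕ) + m - 1)) := by
    rw [← Real.exp_add]; push_cast; ring_nf
  have hbase : ((ν + 1 : ℕ) : ℝ) + m = ν + m + 1 := by push_cast; ring
  rw [ksMajorant, ← hexp, hbase]
  push_cast
  ring

theorem pow_div_factorial_mul_ksMajorant (B E : ℝ) (ν : ℕ) {s m : ℕ} (h : s ≤ m) :
    E ^ s / s.factorial * ksMajorant B E (ν + s) (m - s)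
      = Real.exp (2 * B * (ν + m - 1)) * (E ^ m / m.factorial) *
        ((m.choose s : ℝ) * (ν + s) * (ν + m : ℝ) ^ (((m - s : ℕ) : ℤ) - 1)) := by
  have hsum : ((ν + s : ℕ) : ℝ) + ((m - s : ℕ) : ℝ) = ν + m := by
    push_cast [Nat.cast_sub h]; ring
  rw [ksMajorant, hsum, Nat.cast_choose ℝ h, ← pow_mul_pow_sub E h]
  push_cast
  field_simp

theorem ks_majorant_closed_form_general
    (B E : ℝ)
    (K : ℕ → ℕ → ℝ)
    (hK0 : ∀ ℓ : ℕ, 1 ≤ ℓ → K 0 ℓ = 0)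
    (hKn : ∀ n ℓ : ℕ, 1 ≤ n →
      K n ℓ = Real.exp (2 * B * (n + ℓ - 1)) * n *
        ((n + ℓ : ℝ)) ^ ((ℓ : ℤ) - 1) * E ^ ℓ / ℓ.factorial) :
    K 1 0 = 1 ∧
    ∀ n m : ℕ, 1 ≤ n → 2 ≤ n + m →
      K n m = Real.exp (2 * B) *
        ∑ s ∈ Finset.range (m + 1), E ^ s / s.factorial * K (n - 1 + s) (m - s) := by
  refine ⟨by simp [hKn 1 0 le_rfl], fun n m hn hnm => ?_⟩
  obtain ⟨ν, rfl⟩ : ∃ ν, n = ν + 1 := ⟨n - 1, by omega⟩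
  have hK (s : ℕ) (hs : s ∈ range (m + 1)) : E ^ s / s.factorial * K (ν + 1 - 1 + s) (m - s)
      = Real.exp (2 * B * (ν + m - 1)) * (E ^ m / m.factorial) *
        ((m.choose s : ℝ) * (ν + s) * (ν + m : ℝ) ^ (((m - s : ℕ) : ℤ) - 1)) := by
    rw [Nat.add_sub_cancel,
      ← pow_div_factorial_mul_ksMajorant B E ν (Nat.lt_succ_iff.mp (mem_range.mp hs))]
    rcases Nat.eq_zero_or_pos (ν + s) with h | h
    · rw [h, ksMajorant_zero_left, hK0 _ (by omega)]
    · rw [hKn _ _ h, ksMajorant]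
  have hνm : (ν : ℝ) + m ≠ 0 := by exact_mod_cast (by omega : ν + m ≠ 0)
  rw [sum_congr rfl hK, ← mul_sum, sum_range_choose_mul_add_mul_zpow_abel _ _ hνm (by positivity),
    hKn _ _ hn]
  exact ksMajorant_succ_left B E ν m

/-- (Closed-form solution of the Kirkwood–Salsburg majorant recursion.)
For `B, E ≥ 0`, the family `K(0,0) = 1`, `K(0,ℓ) = 0` for `ℓ ≥ 1`, and, for `n ≥ 1`,
`K(n,ℓ) = e^{2B(n+ℓ−1)} n (n+ℓ)^{ℓ−1} E^ℓ/ℓ!` (with integer exponent `ℓ−1`, so that for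
`ℓ = 0` the factor `(n+ℓ)^{ℓ−1}` is `1/n` and `K(n,0) = e^{2B(n−1)}`) satisfies `K(1,0) = 1`
and the Kirkwood–Salsburg recursion
`K(n,m) = e^{2B} ∑_{s=0}^{m} (E^s/s!) K(n−1+s, m−s)` for all `n ≥ 1`, `m ≥ 0` with
`n + m ≥ 2`. -/
theorem ks_majorant_closed_form
    (B E : ℝ) (hB : 0 ≤ B) (hE : 0 ≤ E)
    (K : ℕ → ℕ → ℝ)
    (hK00 : K 0 0 = 1)
    (hK0 : ∀ ℓ : ℕ, 1 ≤ ℓ → K 0 ℓ = 0)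
    (hKn : ∀ n ℓ : ℕ, 1 ≤ n →
      K n ℓ = Real.exp (2 * B * (n + ℓ - 1)) * n *
        ((n + ℓ : ℝ)) ^ ((ℓ : ℤ) - 1) * E ^ ℓ / ℓ.factorial) :
    K 1 0 = 1 ∧
    ∀ n m : ℕ, 1 ≤ n → 2 ≤ n + m →
      K n m = Real.exp (2 * B) *
        ∑ s ∈ Finset.range (m + 1), E ^ s / s.factorial * K (n - 1 + s) (m - s) :=
  ks_majorant_closed_form_general B E K hK0 hKn
end
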